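/- arXiv:1907.09074 — 11 statements merged into one kernel-verified Lean document; each statement's English description precedes it below -/
import Mathlib

section
/- Every CAT(0) space satisfies the ⊠-inequalities: for any CAT(0) space (X,d), any t,s ∈ [0,1], and any x,y,z,w ∈ X, 0 ≤ (1−t)(1−s)d(x,y)² + t(1−s)d(y,z)² + ts d(z,w)² + (1−t)s d(w,x)² − t(1−t)d(x,z)² − s(1−s)d(y,w)². -/
noncomputable section

/-- A metric space satisfies the ⊠-inequalities. -/
def BoxIneq (X : Type*) [MetricSpace X] : Prop :=
  ∀ t ∈ Set.Icc (0:ℝ) 1, ∀ s ∈ Set.Icc (0:ℝ) 1, ∀ x y z w : X,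
    0 ≤ (1 - t) * (1 - s) * dist x y ^ 2 + t * (1 - s) * dist y z ^ 2
      + t * s * dist z w ^ 2 + (1 - t) * s * dist w x ^ 2
      - t * (1 - t) * dist x z ^ 2 - s * (1 - s) * dist y w ^ 2

/-- `γ : ℝ → X` is a (unit-speed) geodesic from `x` to `y`, parametrized on `[0, dist x y]`. -/
def IsGeodesicFromTo {X : Type*} [MetricSpace X] (γ : ℝ → X) (x y : X) : Prop :=
  γ 0 = x ∧ γ (dist x y) = y ∧
    ∀ s ∈ Set.Icc (0:ℝ) (dist x y), ∀ t ∈ Set.Icc (0:ℝ) (dist x y),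
      dist (γ s) (γ t) = |s - t|

/-- A CAT(0) space: a geodesic metric space in which every geodesic satisfies the
CAT(0) comparison inequality. -/
def IsCAT0Space (X : Type*) [MetricSpace X] : Prop :=
  (∀ x y : X, ∃ γ : ℝ → X, IsGeodesicFromTo γ x y) ∧
  ∀ x y z : X, ∀ γ : ℝ → X, IsGeodesicFromTo γ x y → ∀ t ∈ Set.Icc (0:ℝ) 1,
    dist z (γ (t * dist x y)) ^ 2
      ≤ (1 - t) * dist x z ^ 2 + t * dist y z ^ 2 - t * (1 - t) * dist x y ^ 2

/-- Every CAT(0) space satisfies the ⊠-inequalities. -/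
theorem cat0_boxIneq (X : Type*) [MetricSpace X] (hX : IsCAT0Space X) : BoxIneq X := by
  intro t ht s hs x y z w
  obtain ⟨hgeo, hcomp⟩ := hX
  obtain ⟨γ, hγ⟩ := hgeo x z
  have h1 := hcomp x z y γ hγ t ht
  have h2 := hcomp x z w γ hγ t ht
  set m := γ (t * dist x z) with hm
  have hyw : dist y w ≤ dist y m + dist m w := dist_triangle _ _ _
  have hnn1 : (0:ℝ) ≤ dist y m := dist_nonneg
  have hnn2 : (0:ℝ) ≤ dist m w := dist_nonneg
  have key : s * (1 - s) * dist y w ^ 2 ≤ (1 - s) * dist y m ^ 2 + s * dist m w ^ 2 := by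
    have h3 : s * (1 - s) * dist y w ^ 2 ≤ s * (1 - s) * (dist y m + dist m w) ^ 2 := by
      have h4 : dist y w ^ 2 ≤ (dist y m + dist m w) ^ 2 := by
        have := pow_le_pow_left₀ dist_nonneg hyw 2
        exact this
      have h5 : (0:ℝ) ≤ s * (1 - s) := by nlinarith [hs.1, hs.2]
      exact mul_le_mul_of_nonneg_left h4 h5
    nlinarith [sq_nonneg ((1 - s) * dist y m - s * dist m w)]
  rw [dist_comm z y] at h1
  rw [dist_comm x w, dist_comm w m] at h2
  have c1 := mul_le_mul_of_nonneg_left h1 (by linarith [hs.2] : (0:ℝ) ≤ 1 - s)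
  have c2 := mul_le_mul_of_nonneg_left h2 (by exact hs.1)
  nlinarith [c1, c2, key]
end
end

section
/- Let (X,d) be a metric space satisfying the ⊠-inequalities. Suppose x,y,z ∈ X with x ≠ z and d(x,z) = d(x,y) + d(y,z). Set t = d(x,y)/d(x,z). Then for every w ∈ X, d(y,w)² ≤ (1−t)d(x,w)² + t d(z,w)² − t(1−t)d(x,z)². -/
noncomputable section

/-!
Put `t = d(x,y)/d(x,z)`, so that `d(x,y) = t d(x,z)` and `d(y,z) = (1-t) d(x,z)`. With these
distances the ⊠-inequality for `(t, s)` is `s` times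
`(1-t) d(x,w)² + t d(z,w)² - t(1-t) d(x,z)² - (1-s) d(y,w)² ≥ 0`.
Dividing by `s > 0` and letting `s → 0⁺` gives the comparison inequality.
-/

open Filter Topology

theorem le_of_forall_one_sub_mul_le {b c : ℝ} (h : ∀ s ∈ Set.Ioc (0 : ℝ) 1, (1 - s) * b ≤ c) :
    b ≤ c := by
  have hlim : Tendsto (fun s : ℝ => (1 - s) * b) (𝓝[>] 0) (𝓝 b) := by
    have hcont : Continuous fun s : ℝ => (1 - s) * b := by fun_prop
    simpa using (hcont.tendsto 0).mono_left nhdsWithin_le_nhds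
  refine le_of_tendsto hlim ?_
  filter_upwards [Ioc_mem_nhdsGT one_pos] with s hs using h s hs

namespace BoxIneq

variable {X : Type*} [MetricSpace X]

theorem one_sub_mul_dist_sq_le (hX : BoxIneq X) {x y z : X} {t : ℝ} (ht : t ∈ Set.Icc (0 : ℝ) 1)
    (hxy : dist x y = t * dist x z) (hyz : dist y z = (1 - t) * dist x z) (w : X)
    {s : ℝ} (hs : s ∈ Set.Ioc (0 : ℝ) 1) :
    (1 - s) * dist y w ^ 2
      ≤ (1 - t) * dist x w ^ 2 + t * dist z w ^ 2 - t * (1 - t) * dist x z ^ 2 := by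
  have hbox := hX t ht s (Set.Ioc_subset_Icc_self hs) x y z w
  rw [hxy, hyz, dist_comm w x] at hbox
  have hfactor : 0 ≤ s * ((1 - t) * dist x w ^ 2 + t * dist z w ^ 2
      - t * (1 - t) * dist x z ^ 2 - (1 - s) * dist y w ^ 2) := by
    linarith
  linarith [nonneg_of_mul_nonneg_right hfactor hs.1]

theorem dist_sq_le_of_dist_eq_mul (hX : BoxIneq X) {x y z : X} {t : ℝ}
    (ht : t ∈ Set.Icc (0 : ℝ) 1) (hxy : dist x y = t * dist x z)
    (hyz : dist y z = (1 - t) * dist x z) (w : X) :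
    dist y w ^ 2 ≤ (1 - t) * dist x w ^ 2 + t * dist z w ^ 2 - t * (1 - t) * dist x z ^ 2 :=
  le_of_forall_one_sub_mul_le fun _ hs => hX.one_sub_mul_dist_sq_le ht hxy hyz w hs

end BoxIneq

/-- If `y` lies metrically between `x` and `z` in a space satisfying the ⊠-inequalities,
then the CAT(0) comparison inequality holds at `y` for every `w`. -/
theorem boxIneq_comparison {X : Type*} [MetricSpace X] (hX : BoxIneq X)
    (x y z : X) (hxz : x ≠ z) (hbtw : dist x z = dist x y + dist y z) (w : X) :
    dist y w ^ 2
      ≤ (1 - dist x y / dist x z) * dist x w ^ 2 + (dist x y / dist x z) * dist z w ^ 2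
        - (dist x y / dist x z) * (1 - dist x y / dist x z) * dist x z ^ 2 := by
  have hD : dist x z ≠ 0 := dist_ne_zero.mpr hxz
  have hxy : dist x y = dist x y / dist x z * dist x z := (div_mul_cancel₀ _ hD).symm
  have hyz : dist y z = (1 - dist x y / dist x z) * dist x z := by
    rw [sub_mul, ← hxy, one_mul]
    linarith
  have ht : dist x y / dist x z ∈ Set.Icc (0 : ℝ) 1 :=
    ⟨by positivity, div_le_one_of_le₀ (by linarith [dist_nonneg (x := y) (y := z)]) dist_nonneg⟩
  exact hX.dist_sq_le_of_dist_eq_mul ht hxy hyz w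
end
end

section
/- Let (X,d) be a metric space satisfying the ⊠-inequalities. Suppose x,y,z,w ∈ X and x',y',z',w' ∈ ℝ² satisfy d(x,y) ≤ ‖x'−y'‖, d(y,z) ≤ ‖y'−z'‖, d(z,w) ≤ ‖z'−w'‖, d(w,x) ≤ ‖w'−x'‖, ‖x'−z'‖ ≤ d(x,z), and the segments [x',z'] and [y',w'] intersect. Then d(y,w) ≤ ‖y'−w'‖. -/
noncomputable section

open RealInnerProductSpace

private lemma euclid_id' {E : Type*} [NormedAddCommGroup E] [InnerProductSpace ℝ E]
    (t s : ℝ) (x y z w : E) :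
    (1-t)*(1-s)*‖x-y‖^2 + t*(1-s)*‖y-z‖^2 + t*s*‖z-w‖^2 + (1-t)*s*‖w-x‖^2
      - t*(1-t)*‖x-z‖^2 - s*(1-s)*‖y-w‖^2
    = ‖((1-t)•x + t•z) - ((1-s)•y + s•w)‖^2 := by
  simp only [← real_inner_self_eq_norm_sq, inner_sub_left, inner_sub_right,
    inner_add_left, inner_add_right, real_inner_smul_left, real_inner_smul_right]
  rw [real_inner_comm y x, real_inner_comm z x, real_inner_comm z y,
    real_inner_comm w x, real_inner_comm w y, real_inner_comm w z]
  ring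

private lemma key_real' {c D2 s₀ : ℝ} (hD : 0 ≤ D2) (hs₀0 : 0 ≤ s₀) (hs₀1 : s₀ ≤ 1)
    (h : ∀ s, 0 ≤ s → s ≤ 1 → s*(1-s)*c ≤ (s - s₀)^2 * D2) : c ≤ 0 := by
  by_contra hc
  push_neg at hc
  have hcd : 0 < c + D2 := by linarith
  rcases eq_or_lt_of_le hs₀0 with h0 | h0
  · have hu0 : 0 < c/(2*(c+D2)) := by positivity
    have hu2 : c/(2*(c+D2)) ≤ 1/2 := by
      rw [div_le_div_iff₀ (by linarith) (by norm_num)]; nlinarith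
    have huc : (c/(2*(c+D2))) * (2*(c+D2)) = c := by field_simp
    have := h (c/(2*(c+D2))) (le_of_lt hu0) (by linarith)
    rw [← h0] at this
    nlinarith [sq_nonneg (c/(2*(c+D2))), mul_pos hu0 hcd]
  rcases eq_or_lt_of_le hs₀1 with h1 | h1
  · have hv0 : 0 < c/(2*(c+D2)) := by positivity
    have hv2 : c/(2*(c+D2)) ≤ 1/2 := by
      rw [div_le_div_iff₀ (by linarith) (by norm_num)]; nlinarith
    have huc : (c/(2*(c+D2))) * (2*(c+D2)) = c := by field_simp
    have huc2 : (c/(2*(c+D2))) * ((c/(2*(c+D2))) * (2*(c+D2)))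
        = (c/(2*(c+D2))) * c := by rw [huc]
    have := h (1 - c/(2*(c+D2))) (by linarith) (by linarith)
    rw [h1] at this
    nlinarith [mul_pos hv0 hc, huc2]
  · have := h s₀ hs₀0 hs₀1
    nlinarith [mul_pos (mul_pos h0 (by linarith : (0:ℝ) < 1 - s₀)) hc]

/-- The comparison-quadrangle lemma (Lemma 3.2). -/
theorem boxIneq_quadrangle {X : Type*} [MetricSpace X] (hX : BoxIneq X)
    (x y z w : X) (x' y' z' w' : EuclideanSpace ℝ (Fin 2))
    (h1 : dist x y ≤ dist x' y') (h2 : dist y z ≤ dist y' z')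
    (h3 : dist z w ≤ dist z' w') (h4 : dist w x ≤ dist w' x')
    (h5 : dist x' z' ≤ dist x z)
    (h6 : (segment ℝ x' z' ∩ segment ℝ y' w').Nonempty) :
    dist y w ≤ dist y' w' := by
  obtain ⟨p, hp1, hp2⟩ := h6
  rw [segment_eq_image ℝ x' z'] at hp1
  rw [segment_eq_image ℝ y' w'] at hp2
  obtain ⟨t₀, ht, hp⟩ := hp1
  obtain ⟨s₀, hs, hq⟩ := hp2
  have hp' : (1-t₀)•x' + t₀•z' = p := hp
  have hq' : (1-s₀)•y' + s₀•w' = p := hq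
  have hD : (0:ℝ) ≤ dist y' w' ^ 2 := by positivity
  have master : ∀ s : ℝ, 0 ≤ s → s ≤ 1 →
      s*(1-s)*(dist y w ^ 2 - dist y' w' ^ 2) ≤ (s - s₀)^2 * dist y' w' ^ 2 := by
    intro s hs0 hs1
    have box := hX t₀ ⟨ht.1, ht.2⟩ s ⟨hs0, hs1⟩ x y z w
    have e := euclid_id' t₀ s x' y' z' w'
    have hdiff : ((1-t₀)•x' + t₀•z') - ((1-s)•y' + s•w') = (s - s₀)•(y' - w') := by
      rw [hp', ← hq']; module
    rw [hdiff, norm_smul] at e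
    have e2 : ‖(s - s₀)‖ ^ 2 = (s - s₀)^2 := by
      rw [Real.norm_eq_abs, sq_abs]
    rw [mul_pow, e2] at e
    simp only [← dist_eq_norm] at e
    have b1 : dist x y ^ 2 ≤ dist x' y' ^ 2 := pow_le_pow_left₀ dist_nonneg h1 2
    have b2 : dist y z ^ 2 ≤ dist y' z' ^ 2 := pow_le_pow_left₀ dist_nonneg h2 2
    have b3 : dist z w ^ 2 ≤ dist z' w' ^ 2 := pow_le_pow_left₀ dist_nonneg h3 2
    have b4 : dist w x ^ 2 ≤ dist w' x' ^ 2 := pow_le_pow_left₀ dist_nonneg h4 2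
    have b5 : dist x' z' ^ 2 ≤ dist x z ^ 2 := pow_le_pow_left₀ dist_nonneg h5 2
    have c1 := mul_le_mul_of_nonneg_left b1
      (mul_nonneg (by linarith [ht.2] : (0:ℝ) ≤ 1 - t₀) (by linarith : (0:ℝ) ≤ 1 - s))
    have c2 := mul_le_mul_of_nonneg_left b2
      (mul_nonneg ht.1 (by linarith : (0:ℝ) ≤ 1 - s))
    have c3 := mul_le_mul_of_nonneg_left b3 (mul_nonneg ht.1 hs0)
    have c4 := mul_le_mul_of_nonneg_left b4
      (mul_nonneg (by linarith [ht.2] : (0:ℝ) ≤ 1 - t₀) hs0)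
    have c5 := mul_le_mul_of_nonneg_left b5
      (mul_nonneg ht.1 (by linarith [ht.2] : (0:ℝ) ≤ 1 - t₀))
    linarith [box, c1, c2, c3, c4, c5, e]
  have hkey : dist y w ^ 2 - dist y' w' ^ 2 ≤ 0 :=
    key_real' hD hs.1 hs.2 master
  nlinarith [(dist_nonneg : (0:ℝ) ≤ dist y w), (dist_nonneg : (0:ℝ) ≤ dist y' w')]
end
end

section
/- Let (X,d) be a metric space satisfying the ⊠-inequalities. Suppose x,y,z,w ∈ X with z ≠ w and x',y',z',w' ∈ ℝ² satisfy d(y,z) ≤ ‖y'−z'‖, d(z,w) ≤ ‖z'−w'‖, d(w,x) ≤ ‖w'−x'‖, ‖x'−z'‖ ≤ d(x,z), ‖y'−w'‖ ≤ d(y,w), and the segments [x',z'] and [y',w'] intersect. Then ‖x'−y'‖ ≤ d(x,y). -/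
/-!
In an inner product space the ⊠-inequality is an identity: for `pₜ = (1 - t) x' + t z'` and
`qₛ = (1 - s) y' + s w'` its right-hand side is `‖pₜ - qₛ‖²`. Adding the ⊠-inequality in `X` and
the five comparisons, weighted by the coefficients of the corresponding terms, gives
`(1 - t)(1 - s)(‖x' - y'‖² - d(x, y)²) ≤ ‖pₜ - qₛ‖²`. At the intersection point of the diagonals
the right-hand side vanishes. If that point is the endpoint `z'`, move `t` slightly off it: the
right-hand side is then quadratic in the displacement and the left-hand side linear. Since
`z' ≠ w'`, not both parameters are endpoints, and the symmetry
`(x, y, z, w, t, s) ↦ (y, x, w, z, s, t)` of the ⊠-inequality handles the endpoint `w'`.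
-/

noncomputable section

open Set Filter Topology

theorem nonpos_of_forall_le_mul {c M : ℝ} (h : ∀ ε ∈ Ioo (0 : ℝ) 1, c ≤ ε * M) : c ≤ 0 := by
  have hlim : Tendsto (fun ε : ℝ => ε * M) (𝓝[>] 0) (𝓝 0) :=
    tendsto_nhdsWithin_of_tendsto_nhds
      ((continuous_id.mul continuous_const).tendsto' 0 0 (zero_mul M))
  exact ge_of_tendsto hlim (eventually_of_mem (Ioo_mem_nhdsGT one_pos) h)

section InnerProductSpace

variable {E : Type*} [NormedAddCommGroup E] [InnerProductSpace ℝ E]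

theorem dist_convexCombination_sq (a b c d : E) (t s : ℝ) :
    dist ((1 - t) • a + t • c) ((1 - s) • b + s • d) ^ 2
      = (1 - t) * (1 - s) * dist a b ^ 2 + t * (1 - s) * dist b c ^ 2 + t * s * dist c d ^ 2
        + (1 - t) * s * dist d a ^ 2 - t * (1 - t) * dist a c ^ 2
        - s * (1 - s) * dist b d ^ 2 := by
  simp only [dist_eq_norm, ← real_inner_self_eq_norm_sq, inner_sub_left, inner_sub_right,
    inner_add_left, inner_add_right, real_inner_smul_left, real_inner_smul_right,
    real_inner_comm a b, real_inner_comm a c, real_inner_comm a d, real_inner_comm b c,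
    real_inner_comm b d, real_inner_comm c d]
  ring

variable {X : Type*} [MetricSpace X] {x y z w : X} {x' y' z' w' : E}

theorem BoxIneq.mul_sub_le_dist_convexCombination_sq (hX : BoxIneq X)
    (h1 : dist y z ≤ dist y' z') (h2 : dist z w ≤ dist z' w') (h3 : dist w x ≤ dist w' x')
    (h4 : dist x' z' ≤ dist x z) (h5 : dist y' w' ≤ dist y w)
    {t s : ℝ} (ht : t ∈ Icc 0 1) (hs : s ∈ Icc 0 1) :
    (1 - t) * (1 - s) * (dist x' y' ^ 2 - dist x y ^ 2)
      ≤ dist ((1 - t) • x' + t • z') ((1 - s) • y' + s • w') ^ 2 := by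
  obtain ⟨ht0, ht1⟩ := ht
  obtain ⟨hs0, hs1⟩ := hs
  have sq_le {a b : ℝ} (h : a ≤ b) (ha : 0 ≤ a) : 0 ≤ b ^ 2 - a ^ 2 :=
    sub_nonneg.mpr (pow_le_pow_left₀ ha h 2)
  have e1 := mul_nonneg (mul_nonneg ht0 (sub_nonneg.mpr hs1)) (sq_le h1 dist_nonneg)
  have e2 := mul_nonneg (mul_nonneg ht0 hs0) (sq_le h2 dist_nonneg)
  have e3 := mul_nonneg (mul_nonneg (sub_nonneg.mpr ht1) hs0) (sq_le h3 dist_nonneg)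
  have e4 := mul_nonneg (mul_nonneg ht0 (sub_nonneg.mpr ht1)) (sq_le h4 dist_nonneg)
  have e5 := mul_nonneg (mul_nonneg hs0 (sub_nonneg.mpr hs1)) (sq_le h5 dist_nonneg)
  rw [dist_convexCombination_sq]
  linarith [hX t ⟨ht0, ht1⟩ s ⟨hs0, hs1⟩ x y z w]

theorem BoxIneq.dist_le_of_convexCombination_eq (hX : BoxIneq X)
    (h1 : dist y z ≤ dist y' z') (h2 : dist z w ≤ dist z' w') (h3 : dist w x ≤ dist w' x')
    (h4 : dist x' z' ≤ dist x z) (h5 : dist y' w' ≤ dist y w)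
    {t s : ℝ} (ht : t ∈ Icc 0 1) (hs : s ∈ Ico 0 1)
    (hp : (1 - t) • x' + t • z' = (1 - s) • y' + s • w') :
    dist x' y' ≤ dist x y := by
  have hs1 : 0 < 1 - s := sub_pos.mpr hs.2
  suffices hc : (1 - s) * (dist x' y' ^ 2 - dist x y ^ 2) ≤ 0 by
    have := nonpos_of_mul_nonpos_right hc hs1
    exact (pow_le_pow_iff_left₀ dist_nonneg dist_nonneg two_ne_zero).mp (by linarith)
  have comparison := fun {τ : ℝ} (hτ : τ ∈ Icc 0 1) ↦
    hX.mul_sub_le_dist_convexCombination_sq h1 h2 h3 h4 h5 hτ (Ico_subset_Icc_self hs)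
  rcases ht.2.lt_or_eq with ht1 | rfl
  · have := comparison ht
    rw [hp, dist_self] at this
    exact nonpos_of_mul_nonpos_right (by linarith) (sub_pos.mpr ht1)
  · rw [sub_self, zero_smul, one_smul, zero_add] at hp
    refine nonpos_of_forall_le_mul (M := dist x' z' ^ 2) fun ε hε ↦ ?_
    have hd : dist ((1 - (1 - ε)) • x' + (1 - ε) • z') ((1 - s) • y' + s • w')
        = ε * dist x' z' := by
      rw [← hp, dist_eq_norm, dist_eq_norm, ← norm_smul_of_nonneg hε.1.le (x' - z')]
      congr 1
      module
    have := comparison (τ := 1 - ε) ⟨by linarith [hε.2], by linarith [hε.1]⟩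
    rw [hd] at this
    refine le_of_mul_le_mul_left ?_ hε.1
    linarith

end InnerProductSpace

/-- The edge-comparison lemma (Lemma 3.4). -/
theorem boxIneq_quadrangle_edge {X : Type*} [MetricSpace X] (hX : BoxIneq X)
    (x y z w : X) (hzw : z ≠ w) (x' y' z' w' : EuclideanSpace ℝ (Fin 2))
    (h1 : dist y z ≤ dist y' z') (h2 : dist z w ≤ dist z' w')
    (h3 : dist w x ≤ dist w' x')
    (h4 : dist x' z' ≤ dist x z) (h5 : dist y' w' ≤ dist y w)
    (h6 : (segment ℝ x' z' ∩ segment ℝ y' w').Nonempty) :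
    dist x' y' ≤ dist x y := by
  obtain ⟨p, hpx, hpy⟩ := h6
  rw [segment_eq_image] at hpx hpy
  obtain ⟨t, ht, rfl⟩ := hpx
  obtain ⟨s, hs, hp⟩ := hpy
  have hts : t < 1 ∨ s < 1 := by
    by_contra! h
    obtain rfl : t = 1 := le_antisymm ht.2 h.1
    obtain rfl : s = 1 := le_antisymm hs.2 h.2
    simp only [sub_self, zero_smul, one_smul, zero_add] at hp
    exact hzw (dist_le_zero.mp (by simpa [hp] using h2))
  rcases hts with ht1 | hs1
  · rw [dist_comm x', dist_comm x]
    exact hX.dist_le_of_convexCombination_eq (by rwa [dist_comm x, dist_comm x'])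
      (by rwa [dist_comm w, dist_comm w']) (by rwa [dist_comm z, dist_comm z']) h5 h4 hs
      ⟨ht.1, ht1⟩ hp
  · exact hX.dist_le_of_convexCombination_eq h1 h2 h3 h4 h5 ht ⟨hs.1, hs1⟩ hp.symm
end
end

section
/- Fix a positive integer n, let V = {1,…,n}, E the set of two-element subsets of V, and let A = (a_{ij})_{{i,j}∈E} be real numbers such that every CAT(0) space Y satisfies 0 ≤ Σ_{{i,j}∈E} a_{ij} d_Y(y_i,y_j)² for all y_1,…,y_n ∈ Y. Let E₊(A) be the set of {i,j} ∈ E with a_{ij} > 0 and G_A = (V, E₊(A)). If a metric space X satisfies the G_A(0)-property, then X satisfies 0 ≤ Σ_{{i,j}∈E} a_{ij} d_X(x_i,x_j)² for all x_1,…,x_n ∈ X. -/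
noncomputable section

/-- A metric space `X` satisfies the `G(0)`-property for a graph `G`. -/
def SatisfiesG0 (X : Type*) [MetricSpace X] {V : Type*} (G : SimpleGraph V) : Prop :=
  ∀ f : V → X, ∃ (Y : Type) (_ : MetricSpace Y) (g : V → Y), IsCAT0Space Y ∧
    ∀ u v : V,
      (G.Adj u v → dist (g u) (g v) ≤ dist (f u) (f v)) ∧
      (¬ G.Adj u v → dist (f u) (f v) ≤ dist (g u) (g v))

/-- The graph `G_A` associated to a family of coefficients `a`, where `a i j` for `i < j`
is the coefficient of the pair `{i,j}`: its edges are the pairs with positive coefficient. -/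
def coeffGraph (n : ℕ) (a : Fin n → Fin n → ℝ) : SimpleGraph (Fin n) where
  Adj i j := (i < j ∧ 0 < a i j) ∨ (j < i ∧ 0 < a j i)
  symm := ⟨by intro i j h; tauto⟩
  loopless := ⟨by intro i h; rcases h with ⟨h, -⟩ | ⟨h, -⟩ <;> exact lt_irrefl i h⟩

/- Given `x : Fin n → X`, the `G_A(0)`-property yields a CAT(0) configuration `y`
whose distances shrink on the pairs with `a_{ij} > 0` and grow on the others, so every term
`a_{ij} d(y_i, y_j)²` is at most `a_{ij} d(x_i, x_j)²`. Summing, the quadratic form at `x`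
dominates the one at `y`, which is nonnegative by hypothesis. -/

lemma mul_sq_le_mul_sq_of_sign {c d e : ℝ} (hd : 0 ≤ d) (he : 0 ≤ e) (hpos : 0 < c → e ≤ d)
    (hnonpos : ¬ 0 < c → d ≤ e) : c * e ^ 2 ≤ c * d ^ 2 := by
  by_cases hc : 0 < c
  · exact mul_le_mul_of_nonneg_left (pow_le_pow_left₀ he (hpos hc) 2) hc.le
  · exact mul_le_mul_of_nonpos_left (pow_le_pow_left₀ hd (hnonpos hc) 2) (not_lt.mp hc)

lemma SatisfiesG0.exists_cat0_weighted_sum_le {X : Type*} [MetricSpace X] {V : Type*}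
    {G : SimpleGraph V} (hX : SatisfiesG0 X G) (s : Finset (V × V)) (c : V × V → ℝ)
    (hG : ∀ p ∈ s, G.Adj p.1 p.2 ↔ 0 < c p) (f : V → X) :
    ∃ (Y : Type) (_ : MetricSpace Y) (g : V → Y), IsCAT0Space Y ∧
      ∑ p ∈ s, c p * dist (g p.1) (g p.2) ^ 2 ≤ ∑ p ∈ s, c p * dist (f p.1) (f p.2) ^ 2 := by
  obtain ⟨Y, _, g, hY, hg⟩ := hX f
  refine ⟨Y, inferInstance, g, hY, Finset.sum_le_sum fun p hp => ?_⟩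
  exact mul_sq_le_mul_sq_of_sign dist_nonneg dist_nonneg
    (fun hc => (hg p.1 p.2).1 ((hG p hp).2 hc)) (fun hc => (hg p.1 p.2).2 (mt (hG p hp).1 hc))

lemma coeffGraph_adj_iff_of_lt {n : ℕ} (a : Fin n → Fin n → ℝ) {i j : Fin n} (hij : i < j) :
    (coeffGraph n a).Adj i j ↔ 0 < a i j := by
  refine ⟨?_, fun h => Or.inl ⟨hij, h⟩⟩
  rintro (⟨-, h⟩ | ⟨hji, -⟩)
  · exact h
  · exact absurd hij hji.asymm

theorem g0_implies_quadratic_general (n : ℕ) (a : Fin n → Fin n → ℝ)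
    (hCAT : ∀ (Y : Type) [MetricSpace Y], IsCAT0Space Y → ∀ y : Fin n → Y,
      0 ≤ ∑ p ∈ Finset.univ.filter (fun p : Fin n × Fin n => p.1 < p.2),
            a p.1 p.2 * dist (y p.1) (y p.2) ^ 2)
    (X : Type*) [MetricSpace X] (hX : SatisfiesG0 X (coeffGraph n a)) :
    ∀ x : Fin n → X,
      0 ≤ ∑ p ∈ Finset.univ.filter (fun p : Fin n × Fin n => p.1 < p.2),
            a p.1 p.2 * dist (x p.1) (x p.2) ^ 2 := by
  intro x
  obtain ⟨Y, _, y, hY, hle⟩ := hX.exists_cat0_weighted_sum_le _ (fun p => a p.1 p.2)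
    (fun p hp => coeffGraph_adj_iff_of_lt a (Finset.mem_filter.mp hp).2) x
  exact (hCAT Y hY y).trans hle

/-- Lemma 1.11: if every CAT(0) space satisfies the `(a_{ij})`-quadratic metric inequality
and `X` satisfies the `G_A(0)`-property for the associated graph `G_A`, then `X` satisfies
the `(a_{ij})`-quadratic metric inequality. -/
theorem g0_implies_quadratic (n : ℕ) (hn : 0 < n) (a : Fin n → Fin n → ℝ)
    (hCAT : ∀ (Y : Type) [MetricSpace Y], IsCAT0Space Y → ∀ y : Fin n → Y,
      0 ≤ ∑ p ∈ Finset.univ.filter (fun p : Fin n × Fin n => p.1 < p.2),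
            a p.1 p.2 * dist (y p.1) (y p.2) ^ 2)
    (X : Type*) [MetricSpace X] (hX : SatisfiesG0 X (coeffGraph n a)) :
    ∀ x : Fin n → X,
      0 ≤ ∑ p ∈ Finset.univ.filter (fun p : Fin n × Fin n => p.1 < p.2),
            a p.1 p.2 * dist (x p.1) (x p.2) ^ 2 :=
  g0_implies_quadratic_general n a hCAT X hX
end
end

section
/- Let (X,d) be a metric space and let x,y,z,w ∈ X be four distinct points. Then exactly one of the following holds: (a) {x,y,z,w} admits an isometric embedding into ℝ³; (b) {x,y,z,w} is under-distance with respect to {y,w}; (c) {x,y,z,w} is over-distance with respect to {y,w}. -/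
noncomputable section

/-- `{x,y,z,w}` is under-distance with respect to `{y,w}`: every configuration in `ℝ³`
realizing the five distances `d(x,y), d(y,z), d(z,x), d(x,w), d(w,z)` puts the points
corresponding to `y` and `w` strictly farther apart than `d(y,w)`. -/
def UnderDistance {X : Type*} [MetricSpace X] (x y z w : X) : Prop :=
  ∀ x' y' z' w' : EuclideanSpace ℝ (Fin 3),
    dist x' y' = dist x y → dist y' z' = dist y z → dist z' x' = dist z x →
    dist x' w' = dist x w → dist w' z' = dist w z →
    dist y w < dist y' w'

/-- `{x,y,z,w}` is over-distance with respect to `{y,w}`. -/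
def OverDistance {X : Type*} [MetricSpace X] (x y z w : X) : Prop :=
  ∀ x' y' z' w' : EuclideanSpace ℝ (Fin 3),
    dist x' y' = dist x y → dist y' z' = dist y z → dist z' x' = dist z x →
    dist x' w' = dist x w → dist w' z' = dist w z →
    dist y' w' < dist y w

/-- `{x,y,z,w}` admits an isometric embedding into `ℝ³`. -/
def EmbedsInR3 {X : Type*} [MetricSpace X] (x y z w : X) : Prop :=
  ∃ x' y' z' w' : EuclideanSpace ℝ (Fin 3),
    dist x' y' = dist x y ∧ dist x' z' = dist x z ∧ dist x' w' = dist x w ∧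
    dist y' z' = dist y z ∧ dist y' w' = dist y w ∧ dist z' w' = dist z w

/-! Place `x'` and `z'` on an axis at distance `d(x, z) > 0`. The distances to `x` and `z` pin
`y'` and `w'` to circles about this axis, with axial positions `p₁, p₂` and radii `q₁, q₂`.
Splitting `y' - w'` into its axial part and its part orthogonal to the axis gives
`‖y' - w'‖² = (p₁ - p₂)² + r²` with `|q₁ - q₂| ≤ r ≤ q₁ + q₂`, and rotating `w'` about the axis
attains every value in between. So the possible values of `‖y' - w'‖` form a closed interval
`[m, M]`, and embedding, under-distance and over-distance mean `m ≤ d(y, w) ≤ M`, `d(y, w) < m`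
and `M < d(y, w)`. -/

open Set RealInnerProductSpace

theorem Set.OrdConnected.mem_xor_forall_lt_xor_forall_gt {α : Type*} [LinearOrder α]
    {S : Set α} (hS : S.OrdConnected) (hne : S.Nonempty) (d : α) :
    (d ∈ S ∧ ¬ (∀ t ∈ S, d < t) ∧ ¬ (∀ t ∈ S, t < d)) ∨
    (d ∉ S ∧ (∀ t ∈ S, d < t) ∧ ¬ (∀ t ∈ S, t < d)) ∨
    (d ∉ S ∧ ¬ (∀ t ∈ S, d < t) ∧ (∀ t ∈ S, t < d)) := by
  obtain ⟨s, hs⟩ := hne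
  by_cases hd : d ∈ S
  · exact Or.inl ⟨hd, fun h => lt_irrefl d (h d hd), fun h => lt_irrefl d (h d hd)⟩
  by_cases hbelow : ∀ t ∈ S, d < t
  · exact Or.inr (Or.inl ⟨hd, hbelow, fun h => lt_asymm (hbelow s hs) (h s hs)⟩)
  refine Or.inr (Or.inr ⟨hd, hbelow, fun t ht => ?_⟩)
  obtain ⟨r, hr, hrd⟩ : ∃ r ∈ S, r ≤ d := by
    simpa only [not_forall, not_lt, exists_prop] using hbelow
  by_contra! hdt
  exact hd (hS.out hr ht ⟨hrd, hdt⟩)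

theorem exists_triangle_apex {a b c : ℝ} (ha : 0 < a)
    (hb : b ≤ a + c) (hc : c ≤ b + a) (ha' : a ≤ b + c) :
    ∃ p q : ℝ, 0 ≤ q ∧ p ^ 2 + q ^ 2 = b ^ 2 ∧ (a - p) ^ 2 + q ^ 2 = c ^ 2 := by
  set p := (b ^ 2 + a ^ 2 - c ^ 2) / (2 * a)
  have hp : 2 * a * p = b ^ 2 + a ^ 2 - c ^ 2 := by simp only [p]; field_simp
  -- Heron: `(2ab)² - (b² + a² - c²)²` is the product of the four factors below.
  have heron : (2 * a * p) ^ 2 ≤ (2 * a * b) ^ 2 := by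
    rw [hp]
    nlinarith [mul_nonneg (mul_nonneg (by linarith : (0 : ℝ) ≤ a + b + c)
      (by linarith : (0 : ℝ) ≤ a + b - c)) (mul_nonneg (by linarith : (0 : ℝ) ≤ c + a - b)
      (by linarith : (0 : ℝ) ≤ c - a + b))]
  have hq : 0 ≤ b ^ 2 - p ^ 2 := by nlinarith [mul_pos ha ha]
  refine ⟨p, √(b ^ 2 - p ^ 2), Real.sqrt_nonneg _, ?_, ?_⟩
  · rw [Real.sq_sqrt hq]; ring
  · rw [Real.sq_sqrt hq]; linear_combination -hp

section InnerProductSpace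

variable {E : Type*} [NormedAddCommGroup E] [InnerProductSpace ℝ E]

theorem norm_sub_smul_sq_of_inner_eq {r v : E} (hv : v ≠ 0) {s : ℝ}
    (hr : ⟪r, v⟫ = ‖v‖ * s) : ‖r - (s / ‖v‖) • v‖ ^ 2 = ‖r‖ ^ 2 - s ^ 2 := by
  have hv' : ‖v‖ ≠ 0 := norm_ne_zero_iff.mpr hv
  rw [norm_sub_sq_real, norm_smul, real_inner_smul_right, hr, Real.norm_eq_abs, mul_pow, sq_abs]
  field_simp
  ring

theorem norm_sub_sq_mem_Icc {u p v : E} (hv : v ≠ 0) {p₁ q₁ p₂ q₂ : ℝ}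
    (hq₁ : 0 ≤ q₁) (hq₂ : 0 ≤ q₂) (hu : ⟪u, v⟫ = ‖v‖ * p₁) (hp : ⟪p, v⟫ = ‖v‖ * p₂)
    (hu' : ‖u‖ ^ 2 = p₁ ^ 2 + q₁ ^ 2) (hp' : ‖p‖ ^ 2 = p₂ ^ 2 + q₂ ^ 2) :
    ‖u - p‖ ^ 2 ∈ Icc ((p₁ - p₂) ^ 2 + (q₁ - q₂) ^ 2) ((p₁ - p₂) ^ 2 + (q₁ + q₂) ^ 2) := by
  set u₀ := u - (p₁ / ‖v‖) • v
  set p₀ := p - (p₂ / ‖v‖) • v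
  have hu₀ : ‖u₀‖ = q₁ := by
    rw [← sq_eq_sq₀ (norm_nonneg _) hq₁, norm_sub_smul_sq_of_inner_eq hv hu, hu']; ring
  have hp₀ : ‖p₀‖ = q₂ := by
    rw [← sq_eq_sq₀ (norm_nonneg _) hq₂, norm_sub_smul_sq_of_inner_eq hv hp, hp']; ring
  have pythagoras : ‖u - p‖ ^ 2 = (p₁ - p₂) ^ 2 + ‖u₀ - p₀‖ ^ 2 := by
    have h := norm_sub_smul_sq_of_inner_eq hv (r := u - p) (s := p₁ - p₂)
      (by rw [inner_sub_left, hu, hp]; ring)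
    rw [show u - p - ((p₁ - p₂) / ‖v‖) • v = u₀ - p₀ by
      simp only [u₀, p₀, sub_div, sub_smul]; abel] at h
    linarith
  have lower : (q₁ - q₂) ^ 2 ≤ ‖u₀ - p₀‖ ^ 2 := by
    rw [sq_le_sq, abs_norm, ← hu₀, ← hp₀]; exact abs_norm_sub_norm_le u₀ p₀
  have upper : ‖u₀ - p₀‖ ≤ q₁ + q₂ := by
    rw [← hu₀, ← hp₀]; exact norm_sub_le u₀ p₀
  rw [pythagoras]
  exact ⟨by linarith, by gcongr⟩

theorem inner_sub_sub_eq_norm_mul {x y z : E} {p q : ℝ} (h₁ : p ^ 2 + q ^ 2 = dist x y ^ 2)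
    (h₂ : (dist x z - p) ^ 2 + q ^ 2 = dist y z ^ 2) : ⟪y - x, z - x⟫ = ‖z - x‖ * p := by
  have h := norm_sub_sq_real (y - x) (z - x)
  rw [sub_sub_sub_cancel_right, ← dist_eq_norm, ← dist_eq_norm, ← dist_eq_norm,
    dist_comm y x, dist_comm z x] at h
  rw [← dist_eq_norm, dist_comm]
  linear_combination (h + h₂ - h₁) / 2

theorem dist_sq_mem_Icc_of_apex {x y z w : E} (hxz : x ≠ z) {p₁ q₁ p₂ q₂ : ℝ}
    (hq₁ : 0 ≤ q₁) (hq₂ : 0 ≤ q₂)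
    (hy₁ : p₁ ^ 2 + q₁ ^ 2 = dist x y ^ 2) (hy₂ : (dist x z - p₁) ^ 2 + q₁ ^ 2 = dist y z ^ 2)
    (hw₁ : p₂ ^ 2 + q₂ ^ 2 = dist x w ^ 2) (hw₂ : (dist x z - p₂) ^ 2 + q₂ ^ 2 = dist w z ^ 2) :
    dist y w ^ 2 ∈ Icc ((p₁ - p₂) ^ 2 + (q₁ - q₂) ^ 2) ((p₁ - p₂) ^ 2 + (q₁ + q₂) ^ 2) := by
  rw [dist_eq_norm, ← sub_sub_sub_cancel_right y w x]
  refine norm_sub_sq_mem_Icc (sub_ne_zero.mpr hxz.symm) hq₁ hq₂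
    (inner_sub_sub_eq_norm_mul hy₁ hy₂) (inner_sub_sub_eq_norm_mul hw₁ hw₂) ?_ ?_
  · rw [hy₁, dist_comm, dist_eq_norm]
  · rw [hw₁, dist_comm, dist_eq_norm]

end InnerProductSpace

theorem EuclideanSpace.dist_toLp_three (a b c a' b' c' : ℝ) :
    dist !₂[a, b, c] !₂[a', b', c'] = √((a - a') ^ 2 + (b - b') ^ 2 + (c - c') ^ 2) := by
  rw [EuclideanSpace.dist_eq, Fin.sum_univ_three]
  simp [Real.dist_eq, sq_abs]

open Real EuclideanSpace in
theorem exists_config_of_mem_Icc {a b c e f p₁ q₁ p₂ q₂ t : ℝ}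
    (ha : 0 ≤ a) (hb : 0 ≤ b) (hc : 0 ≤ c) (he : 0 ≤ e) (hf : 0 ≤ f)
    (hy₁ : p₁ ^ 2 + q₁ ^ 2 = b ^ 2) (hy₂ : (a - p₁) ^ 2 + q₁ ^ 2 = c ^ 2)
    (hw₁ : p₂ ^ 2 + q₂ ^ 2 = e ^ 2) (hw₂ : (a - p₂) ^ 2 + q₂ ^ 2 = f ^ 2)
    (ht : t ∈ Icc √((p₁ - p₂) ^ 2 + (q₁ - q₂) ^ 2) √((p₁ - p₂) ^ 2 + (q₁ + q₂) ^ 2)) :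
    ∃ x' y' z' w' : EuclideanSpace ℝ (Fin 3), dist x' y' = b ∧ dist y' z' = c ∧
      dist z' x' = a ∧ dist x' w' = e ∧ dist w' z' = f ∧ dist y' w' = t := by
  -- Rotate `w'` about the axis through `x'` and `z'` by an angle `θ ∈ [0, π]`.
  set w' : ℝ → EuclideanSpace ℝ (Fin 3) := fun θ => !₂[p₂, q₂ * cos θ, q₂ * sin θ]
  set g : ℝ → ℝ := fun θ => √((p₁ - p₂) ^ 2 + q₁ ^ 2 + q₂ ^ 2 - 2 * q₁ * q₂ * cos θ)
  have hg₀ : g 0 = √((p₁ - p₂) ^ 2 + (q₁ - q₂) ^ 2) := by simp only [g, cos_zero]; congr 1; ring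
  have hgπ : g π = √((p₁ - p₂) ^ 2 + (q₁ + q₂) ^ 2) := by simp only [g, cos_pi]; congr 1; ring
  obtain ⟨θ, -, hθ⟩ :=
    intermediate_value_Icc pi_pos.le (f := g) (by fun_prop) (by rwa [hg₀, hgπ])
  refine ⟨!₂[0, 0, 0], !₂[p₁, q₁, 0], !₂[a, 0, 0], w' θ, ?_, ?_, ?_, ?_, ?_, ?_⟩
  all_goals simp only [w', dist_toLp_three]
  · convert sqrt_sq hb using 2; linear_combination hy₁
  · convert sqrt_sq hc using 2; linear_combination hy₂
  · convert sqrt_sq ha using 2; ring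
  · convert sqrt_sq he using 2; linear_combination hw₁ + q₂ ^ 2 * sin_sq_add_cos_sq θ
  · convert sqrt_sq hf using 2; linear_combination hw₂ + q₂ ^ 2 * sin_sq_add_cos_sq θ
  · rw [← hθ]; congr 1; linear_combination q₂ ^ 2 * sin_sq_add_cos_sq θ

section MetricSpace

variable {X : Type*} [MetricSpace X]

def realizedDists (x y z w : X) : Set ℝ :=
  {t | ∃ x' y' z' w' : EuclideanSpace ℝ (Fin 3), dist x' y' = dist x y ∧
    dist y' z' = dist y z ∧ dist z' x' = dist z x ∧ dist x' w' = dist x w ∧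
    dist w' z' = dist w z ∧ dist y' w' = t}

theorem underDistance_iff (x y z w : X) :
    UnderDistance x y z w ↔ ∀ t ∈ realizedDists x y z w, dist y w < t := by
  constructor
  · rintro h t ⟨x', y', z', w', h₁, h₂, h₃, h₄, h₅, rfl⟩
    exact h x' y' z' w' h₁ h₂ h₃ h₄ h₅
  · intro h x' y' z' w' h₁ h₂ h₃ h₄ h₅
    exact h _ ⟨x', y', z', w', h₁, h₂, h₃, h₄, h₅, rfl⟩

theorem overDistance_iff (x y z w : X) :
    OverDistance x y z w ↔ ∀ t ∈ realizedDists x y z w, t < dist y w := by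
  constructor
  · rintro h t ⟨x', y', z', w', h₁, h₂, h₃, h₄, h₅, rfl⟩
    exact h x' y' z' w' h₁ h₂ h₃ h₄ h₅
  · intro h x' y' z' w' h₁ h₂ h₃ h₄ h₅
    exact h _ ⟨x', y', z', w', h₁, h₂, h₃, h₄, h₅, rfl⟩

theorem embedsInR3_iff (x y z w : X) :
    EmbedsInR3 x y z w ↔ dist y w ∈ realizedDists x y z w := by
  constructor
  · rintro ⟨x', y', z', w', hxy, hxz, hxw, hyz, hyw, hzw⟩
    exact ⟨x', y', z', w', hxy, hyz, by rw [dist_comm, hxz, dist_comm], hxw,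
      by rw [dist_comm, hzw, dist_comm], hyw⟩
  · rintro ⟨x', y', z', w', hxy, hyz, hzx, hxw, hwz, hyw⟩
    exact ⟨x', y', z', w', hxy, by rw [dist_comm, hzx, dist_comm], hxw, hyz, hyw,
      by rw [dist_comm, hwz, dist_comm]⟩

theorem exists_apex_of_ne {x z : X} (hxz : x ≠ z) (y : X) :
    ∃ p q : ℝ, 0 ≤ q ∧ p ^ 2 + q ^ 2 = dist x y ^ 2 ∧ (dist x z - p) ^ 2 + q ^ 2 = dist y z ^ 2 :=
  exists_triangle_apex (dist_pos.mpr hxz) (dist_triangle_right x y z) (dist_triangle_left y z x)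
    (dist_triangle x y z)

theorem realizedDists_eq_Icc {x z : X} (hxz : x ≠ z) (y w : X) :
    ∃ m M, m ≤ M ∧ realizedDists x y z w = Icc m M := by
  obtain ⟨p₁, q₁, hq₁, hy₁, hy₂⟩ := exists_apex_of_ne hxz y
  obtain ⟨p₂, q₂, hq₂, hw₁, hw₂⟩ := exists_apex_of_ne hxz w
  refine ⟨√((p₁ - p₂) ^ 2 + (q₁ - q₂) ^ 2), √((p₁ - p₂) ^ 2 + (q₁ + q₂) ^ 2),
    Real.sqrt_le_sqrt (by nlinarith [mul_nonneg hq₁ hq₂]), subset_antisymm ?_ fun t ht => ?_⟩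
  · rintro _ ⟨x', y', z', w', h₁, h₂, h₃, h₄, h₅, rfl⟩
    have h₃' : dist x' z' = dist x z := by rw [dist_comm, h₃, dist_comm]
    have hx'z' : x' ≠ z' := dist_pos.mp (h₃' ▸ dist_pos.mpr hxz)
    have h := dist_sq_mem_Icc_of_apex hx'z' hq₁ hq₂ (by rw [h₁, hy₁]) (by rw [h₂, h₃', hy₂])
      (by rw [h₄, hw₁]) (by rw [h₅, h₃', hw₂])
    rw [← Real.sqrt_sq (dist_nonneg : 0 ≤ dist y' w')]
    exact ⟨Real.sqrt_le_sqrt h.1, Real.sqrt_le_sqrt h.2⟩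
  · exact exists_config_of_mem_Icc dist_nonneg dist_nonneg dist_nonneg dist_nonneg dist_nonneg
      hy₁ (dist_comm z x ▸ hy₂) hw₁ (dist_comm z x ▸ hw₂) ht

end MetricSpace

theorem embeds_or_under_or_over_general {X : Type*} [MetricSpace X] (x y z w : X)
    (hxz : x ≠ z) :
    (EmbedsInR3 x y z w ∧ ¬ UnderDistance x y z w ∧ ¬ OverDistance x y z w) ∨
    (¬ EmbedsInR3 x y z w ∧ UnderDistance x y z w ∧ ¬ OverDistance x y z w) ∨
    (¬ EmbedsInR3 x y z w ∧ ¬ UnderDistance x y z w ∧ OverDistance x y z w) := by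
  obtain ⟨m, M, hmM, hS⟩ := realizedDists_eq_Icc hxz y w
  rw [embedsInR3_iff, underDistance_iff, overDistance_iff, hS]
  exact ordConnected_Icc.mem_xor_forall_lt_xor_forall_gt (nonempty_Icc.mpr hmM) _

/-- Proposition 6.2: for four distinct points, exactly one of the following holds:
they embed isometrically into `ℝ³`, they are under-distance with respect to `{y,w}`,
or they are over-distance with respect to `{y,w}`. -/
theorem embeds_or_under_or_over {X : Type*} [MetricSpace X] (x y z w : X)
    (hxy : x ≠ y) (hxz : x ≠ z) (hxw : x ≠ w)
    (hyz : y ≠ z) (hyw : y ≠ w) (hzw : z ≠ w) :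
    (EmbedsInR3 x y z w ∧ ¬ UnderDistance x y z w ∧ ¬ OverDistance x y z w) ∨
    (¬ EmbedsInR3 x y z w ∧ UnderDistance x y z w ∧ ¬ OverDistance x y z w) ∨
    (¬ EmbedsInR3 x y z w ∧ ¬ UnderDistance x y z w ∧ OverDistance x y z w) :=
  embeds_or_under_or_over_general x y z w hxz
end
end

section
/- Let (X,d) be a metric space satisfying the ⊠-inequalities and let x,y,z,w ∈ X be four distinct points such that {x,y,z,w} is under-distance with respect to {y,w}. Suppose x',y',z',w' ∈ ℝ² satisfy ‖x'−y'‖ = d(x,y), ‖y'−z'‖ = d(y,z), ‖z'−x'‖ = d(z,x), ‖x'−w'‖ = d(x,w), ‖w'−z'‖ = d(w,z). Then the segments [x',y'] and [z',w'] are disjoint, the segments [x',w'] and [y',z'] are disjoint, and the four points x',y',z',w' are not collinear. -/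
noncomputable section

/- Auxiliary lemmas -/

lemma box_key {E : Type*} [NormedAddCommGroup E] [InnerProductSpace ℝ E]
    (a b c d : E) (t s : ℝ) :
    ‖((1-t)•a + t•c) - ((1-s)•b + s•d)‖^2
      = (1-t)*(1-s)*dist a b^2 + t*(1-s)*dist b c^2 + t*s*dist c d^2
        + (1-t)*s*dist d a^2 - t*(1-t)*dist a c^2 - s*(1-s)*dist b d^2 := by
  simp only [dist_eq_norm, ← real_inner_self_eq_norm_sq]
  simp only [inner_sub_left, inner_sub_right, inner_add_left, inner_add_right,
    real_inner_smul_left, real_inner_smul_right]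
  rw [real_inner_comm b a, real_inner_comm c a, real_inner_comm c b,
    real_inner_comm d a, real_inner_comm d b, real_inner_comm d c]
  ring

noncomputable def emb23 (v : EuclideanSpace ℝ (Fin 2)) : EuclideanSpace ℝ (Fin 3) :=
  (WithLp.equiv 2 (Fin 3 → ℝ)).symm ![v 0, v 1, 0]

lemma emb23_dist (u v : EuclideanSpace ℝ (Fin 2)) : dist (emb23 u) (emb23 v) = dist u v := by
  simp [emb23, EuclideanSpace.dist_eq, Fin.sum_univ_three, Fin.sum_univ_two]

lemma tiny (c K : ℝ) (hK : 0 ≤ K) (h : ∀ t : ℝ, 0 < t → t ≤ 1 → t * c ≤ t^2 * K) :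
    c ≤ 0 := by
  by_contra hc
  push_neg at hc
  set t := min 1 (c/(2*(K+1))) with ht
  have htpos : 0 < t := lt_min one_pos (by positivity)
  have ht1 : t ≤ 1 := min_le_left _ _
  have ht2 : t ≤ c/(2*(K+1)) := min_le_right _ _
  have hmain := h t htpos ht1
  have h2 : t * K ≤ c/(2*(K+1)) * K := mul_le_mul_of_nonneg_right ht2 hK
  have h3 : c/(2*(K+1)) * K < c := by
    rw [div_mul_eq_mul_div, div_lt_iff₀ (by linarith)]
    nlinarith
  have h4 : t * (t * K) ≤ t * (c/(2*(K+1)) * K) :=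
    mul_le_mul_of_nonneg_left h2 htpos.le
  have h5 : t * (c/(2*(K+1)) * K) < t * c := mul_lt_mul_of_pos_left h3 htpos
  nlinarith

lemma segdisj {E : Type*} [NormedAddCommGroup E] [InnerProductSpace ℝ E]
    {δ : ℝ} (hδ : 0 < δ) {a b c d : E} (hab : a ≠ b)
    (H : ∀ t ∈ Set.Icc (0:ℝ) 1, ∀ s ∈ Set.Icc (0:ℝ) 1,
      t * s * δ ≤ ‖((1-t)•a + t•c) - ((1-s)•b + s•d)‖^2) :
    segment ℝ a c ∩ segment ℝ b d = ∅ := by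
  rw [Set.eq_empty_iff_forall_notMem]
  rintro p ⟨hp1, hp2⟩
  rw [segment_eq_image] at hp1 hp2
  obtain ⟨t, ht, hpt'⟩ := hp1
  obtain ⟨s, hs, hps'⟩ := hp2
  have hpt : (1 - t) • a + t • c = p := hpt'
  have hps : (1 - s) • b + s • d = p := hps'
  have h0 : t * s * δ ≤ 0 := by
    have h := H t ht s hs
    rw [hpt, hps, sub_self] at h
    simpa using h
  have hts : t = 0 ∨ s = 0 := by
    have h1 : t * s ≤ 0 := by nlinarith
    have h2 : 0 ≤ t * s := mul_nonneg ht.1 hs.1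
    exact mul_eq_zero.mp (le_antisymm h1 h2)
  have hkey : t = 0 ∧ s = 0 := by
    rcases hts with h | h
    · have hap : a = p := by rw [← hpt, h]; simp
      have hs0 : s * δ ≤ 0 := by
        apply tiny (s*δ) (‖c - a‖^2) (by positivity)
        intro u hu hu1
        have hH := H u ⟨hu.le, hu1⟩ s hs
        rw [hps, ← hap] at hH
        have heq : ((1-u)•a + u•c) - a = u • (c - a) := by
          rw [sub_smul, one_smul, smul_sub]; abel
        rw [heq, norm_smul, Real.norm_eq_abs, abs_of_pos hu] at hH
        nlinarith [hH]
      have : s = 0 := le_antisymm (by nlinarith [hs.1]) hs.1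
      exact ⟨h, this⟩
    · have hbp : b = p := by rw [← hps, h]; simp
      have ht0 : t * δ ≤ 0 := by
        apply tiny (t*δ) (‖d - b‖^2) (by positivity)
        intro u hu hu1
        have hH := H t ht u ⟨hu.le, hu1⟩
        rw [hpt, ← hbp] at hH
        have heq : b - ((1-u)•b + u•d) = -(u • (d - b)) := by
          rw [sub_smul, one_smul, smul_sub]; abel
        rw [heq, norm_neg, norm_smul, Real.norm_eq_abs, abs_of_pos hu] at hH
        nlinarith [hH]
      have : t = 0 := le_antisymm (by nlinarith [ht.1]) ht.1
      exact ⟨this, h⟩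
  have hap : a = p := by rw [← hpt, hkey.1]; simp
  have hbp : b = p := by rw [← hps, hkey.2]; simp
  exact hab (hap.trans hbp.symm)

lemma mem_uIcc_of {p q m : ℝ} (h1 : min p q ≤ m) (h2 : m ≤ max p q) :
    m ∈ Set.uIcc p q := by
  rcases le_total p q with h | h
  · exact Set.mem_uIcc.mpr (Or.inl ⟨min_eq_left h ▸ h1, max_eq_right h ▸ h2⟩)
  · exact Set.mem_uIcc.mpr (Or.inr ⟨min_eq_right h ▸ h1, max_eq_left h ▸ h2⟩)

lemma real_cross (a b c d : ℝ) :
    (Set.uIcc a b ∩ Set.uIcc c d).Nonempty ∨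
      (Set.uIcc a d ∩ Set.uIcc b c).Nonempty := by
  by_cases h1 : max a b < min c d
  · right
    refine ⟨max a b, mem_uIcc_of ?_ ?_, mem_uIcc_of ?_ ?_⟩
    · exact le_trans (min_le_left a d) (le_max_left a b)
    · exact le_trans (le_of_lt (lt_of_lt_of_le h1 (min_le_right c d))) (le_max_right a d)
    · exact le_trans (min_le_left b c) (le_max_right a b)
    · exact le_trans (le_of_lt (lt_of_lt_of_le h1 (min_le_left c d))) (le_max_right b c)
  · by_cases h2 : max c d < min a b
    · right
      refine ⟨max c d, mem_uIcc_of ?_ ?_, mem_uIcc_of ?_ ?_⟩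
      · exact le_trans (min_le_right a d) (le_max_right c d)
      · exact le_trans (le_of_lt (lt_of_lt_of_le h2 (min_le_left a b))) (le_max_left a d)
      · exact le_trans (min_le_right b c) (le_max_left c d)
      · exact le_trans (le_of_lt (lt_of_lt_of_le h2 (min_le_right a b))) (le_max_left b c)
    · left
      push_neg at h1 h2
      refine ⟨max (min a b) (min c d), mem_uIcc_of ?_ ?_, mem_uIcc_of ?_ ?_⟩
      · exact le_max_left _ _
      · exact max_le min_le_max h1
      · exact le_max_right _ _
      · exact max_le h2 min_le_max


/-- Lemma 6.5: in a planar configuration realizing the five distances of an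
under-distance quadruple, the segments `[x',y']` and `[z',w']` are disjoint, the
segments `[x',w']` and `[y',z']` are disjoint, and the four points are not collinear. -/
theorem underDistance_planar_config {X : Type*} [MetricSpace X] (hX : BoxIneq X)
    (x y z w : X)
    (hxy : x ≠ y) (hxz : x ≠ z) (hxw : x ≠ w)
    (hyz : y ≠ z) (hyw : y ≠ w) (hzw : z ≠ w)
    (hud : UnderDistance x y z w)
    (x' y' z' w' : EuclideanSpace ℝ (Fin 2))
    (h1 : dist x' y' = dist x y) (h2 : dist y' z' = dist y z)
    (h3 : dist z' x' = dist z x) (h4 : dist x' w' = dist x w)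
    (h5 : dist w' z' = dist w z) :
    segment ℝ x' y' ∩ segment ℝ z' w' = ∅ ∧
    segment ℝ x' w' ∩ segment ℝ y' z' = ∅ ∧
    ¬ Collinear ℝ ({x', y', z', w'} : Set (EuclideanSpace ℝ (Fin 2))) := by
  -- derived distance equalities
  have e1 : dist x' z' = dist x z := by rw [dist_comm x' z', h3, dist_comm]
  have e2 : dist z' y' = dist z y := by rw [dist_comm z' y', h2, dist_comm]
  have e3 : dist w' x' = dist w x := by rw [dist_comm w' x', h4, dist_comm]
  have e4 : dist z' w' = dist z w := by rw [dist_comm z' w', h5, dist_comm]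
  -- under-distance applied to the planar configuration
  have hlt : dist y w < dist y' w' := by
    have h := hud (emb23 x') (emb23 y') (emb23 z') (emb23 w')
      (by rw [emb23_dist]; exact h1) (by rw [emb23_dist]; exact h2)
      (by rw [emb23_dist]; exact h3) (by rw [emb23_dist]; exact h4)
      (by rw [emb23_dist]; exact h5)
    rwa [emb23_dist] at h
  have hδ : 0 < dist y' w' ^ 2 - dist y w ^ 2 := by
    have := pow_lt_pow_left₀ hlt dist_nonneg (two_ne_zero)
    linarith
  have hx'z' : x' ≠ z' := by
    intro h
    apply hxz
    have : dist z x = 0 := by rw [← h3, h, dist_self]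
    exact (dist_eq_zero.mp this).symm
  -- family inequality for [x',y'] vs [z',w']
  have H1 : ∀ t ∈ Set.Icc (0:ℝ) 1, ∀ s ∈ Set.Icc (0:ℝ) 1,
      t * s * (dist y' w' ^ 2 - dist y w ^ 2)
        ≤ ‖((1-t)•x' + t•y') - ((1-s)•z' + s•w')‖^2 := by
    intro t ht s hs
    have hbox := hX t ht s hs x z y w
    rw [box_key x' z' y' w' t s, e1, e2, e3, h1, e4]
    linarith
  -- family inequality for [z',y'] vs [x',w']
  have H2 : ∀ t ∈ Set.Icc (0:ℝ) 1, ∀ s ∈ Set.Icc (0:ℝ) 1,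
      t * s * (dist y' w' ^ 2 - dist y w ^ 2)
        ≤ ‖((1-t)•z' + t•y') - ((1-s)•x' + s•w')‖^2 := by
    intro t ht s hs
    have hbox := hX t ht s hs z x y w
    rw [box_key z' x' y' w' t s, h3, h1, h4, h5, e2]
    linarith
  have part1 : segment ℝ x' y' ∩ segment ℝ z' w' = ∅ := segdisj hδ hx'z' H1
  have part2' : segment ℝ z' y' ∩ segment ℝ x' w' = ∅ := segdisj hδ hx'z'.symm H2
  have part2 : segment ℝ x' w' ∩ segment ℝ y' z' = ∅ := by
    rw [Set.inter_comm, segment_symm]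
    exact part2'
  refine ⟨part1, part2, ?_⟩
  intro hcol
  rw [collinear_iff_exists_forall_eq_smul_vadd] at hcol
  obtain ⟨p₀, v, hv⟩ := hcol
  obtain ⟨ra, hra⟩ := hv x' (by simp)
  obtain ⟨rb, hrb⟩ := hv y' (by simp)
  obtain ⟨rc, hrc⟩ := hv z' (by simp)
  obtain ⟨rd, hrd⟩ := hv w' (by simp)
  set f : ℝ →ᵃ[ℝ] EuclideanSpace ℝ (Fin 2) := AffineMap.lineMap p₀ (v +ᵥ p₀) with hfdef
  have hf : ∀ r : ℝ, f r = r • v +ᵥ p₀ := fun r => by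
    simp [hfdef, AffineMap.lineMap_apply, vadd_vsub]
  have hfa : f ra = x' := by rw [hf, ← hra]
  have hfb : f rb = y' := by rw [hf, ← hrb]
  have hfc : f rc = z' := by rw [hf, ← hrc]
  have hfd : f rd = w' := by rw [hf, ← hrd]
  rcases real_cross ra rb rc rd with ⟨m, hm1, hm2⟩ | ⟨m, hm1, hm2⟩
  · have hmem : f m ∈ segment ℝ x' y' ∩ segment ℝ z' w' := by
      constructor
      · have : f m ∈ f '' segment ℝ ra rb := ⟨m, by rwa [segment_eq_uIcc], rfl⟩
        rwa [image_segment, hfa, hfb] at this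
      · have : f m ∈ f '' segment ℝ rc rd := ⟨m, by rwa [segment_eq_uIcc], rfl⟩
        rwa [image_segment, hfc, hfd] at this
    rw [part1] at hmem
    exact hmem
  · have hmem : f m ∈ segment ℝ x' w' ∩ segment ℝ y' z' := by
      constructor
      · have : f m ∈ f '' segment ℝ ra rd := ⟨m, by rwa [segment_eq_uIcc], rfl⟩
        rwa [image_segment, hfa, hfd] at this
      · have : f m ∈ f '' segment ℝ rb rc := ⟨m, by rwa [segment_eq_uIcc], rfl⟩
        rwa [image_segment, hfb, hfc] at this
    rw [part2] at hmem
    exact hmem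
end
end

section
/- Let (X,d) be a metric space satisfying the ⊠-inequalities and let x,y,z,w ∈ X be four distinct points such that {x,y,z,w} is over-distance with respect to {x,w} and with respect to {y,w}. Then {x,y,z,w} is not over-distance with respect to {z,w}. -/
noncomputable section

/-- A point of `ℝ³` with the given coordinates. -/
def ODpt (a b c : ℝ) : EuclideanSpace ℝ (Fin 3) := (WithLp.equiv 2 _).symm ![a, b, c]

lemma ODpt_dist_sq (a b c d e f : ℝ) :
    dist (ODpt a b c) (ODpt d e f) ^ 2 = (a - d) ^ 2 + (b - e) ^ 2 + (c - f) ^ 2 := by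
  rw [EuclideanSpace.dist_eq, Real.sq_sqrt (by positivity)]
  simp [ODpt, Fin.sum_univ_three, Real.dist_eq, sq_abs]

lemma ODpt_dist_eq (a b c d e f L : ℝ) (hL : 0 ≤ L)
    (h : (a - d) ^ 2 + (b - e) ^ 2 + (c - f) ^ 2 = L ^ 2) :
    dist (ODpt a b c) (ODpt d e f) = L := by
  have h2 : dist (ODpt a b c) (ODpt d e f) ^ 2 = L ^ 2 := by rw [ODpt_dist_sq]; exact h
  calc dist (ODpt a b c) (ODpt d e f)
      = Real.sqrt (dist (ODpt a b c) (ODpt d e f) ^ 2) := (Real.sqrt_sq dist_nonneg).symm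
    _ = Real.sqrt (L ^ 2) := by rw [h2]
    _ = L := Real.sqrt_sq hL

/-- The planar configuration obtained by gluing two comparison triangles along a common
side, on opposite sides of that side. -/
lemma OD_glue (L M N QQ BB c1 c3 : ℝ) (hL : 0 < L) (hM : 0 < M) (hN : 0 < N)
    (hQ : 0 ≤ QQ) (hB : 0 ≤ BB)
    (hc1 : -1 ≤ c1) (hc1' : c1 ≤ 1) (hc3 : -1 ≤ c3) (hc3' : c3 ≤ 1)
    (e1 : QQ ^ 2 = L ^ 2 + M ^ 2 - 2 * L * M * c1)
    (e3 : BB ^ 2 = L ^ 2 + N ^ 2 - 2 * L * N * c3) :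
    ∃ A B C D : EuclideanSpace ℝ (Fin 3),
      dist A B = L ∧ dist A C = M ∧ dist A D = N ∧ dist B C = QQ ∧ dist B D = BB ∧
      dist C D ^ 2 = M ^ 2 + N ^ 2
        - 2 * M * N * Real.cos (Real.arccos c1 + Real.arccos c3) := by
  have h1 : (0:ℝ) ≤ 1 - c1 ^ 2 := by nlinarith
  have h3 : (0:ℝ) ≤ 1 - c3 ^ 2 := by nlinarith
  set s1 := Real.sqrt (1 - c1 ^ 2) with hs1d
  set s3 := Real.sqrt (1 - c3 ^ 2) with hs3d
  have hs1 : s1 ^ 2 = 1 - c1 ^ 2 := Real.sq_sqrt h1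
  have hs3 : s3 ^ 2 = 1 - c3 ^ 2 := Real.sq_sqrt h3
  refine ⟨ODpt 0 0 0, ODpt L 0 0, ODpt (M * c1) (M * s1) 0, ODpt (N * c3) (-(N * s3)) 0,
    ?_, ?_, ?_, ?_, ?_, ?_⟩
  · exact ODpt_dist_eq _ _ _ _ _ _ _ hL.le (by ring)
  · exact ODpt_dist_eq _ _ _ _ _ _ _ hM.le (by linear_combination M ^ 2 * hs1)
  · exact ODpt_dist_eq _ _ _ _ _ _ _ hN.le (by linear_combination N ^ 2 * hs3)
  · exact ODpt_dist_eq _ _ _ _ _ _ _ hQ (by linear_combination M ^ 2 * hs1 - e1)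
  · exact ODpt_dist_eq _ _ _ _ _ _ _ hB (by linear_combination N ^ 2 * hs3 - e3)
  · rw [ODpt_dist_sq, Real.cos_add, Real.cos_arccos hc1 hc1', Real.cos_arccos hc3 hc3',
      Real.sin_arccos, Real.sin_arccos, ← hs1d, ← hs3d]
    linear_combination M ^ 2 * hs1 + N ^ 2 * hs3

/-- The two base angles of a Euclidean comparison triangle sum to at most `π`. -/
lemma OD_pair_le_pi (p u v : ℝ) (hp : 0 < p) (hu : 0 < u) (hv : 0 < v)
    (h : (u - v) ^ 2 ≤ p ^ 2) :
    Real.arccos ((p ^ 2 + u ^ 2 - v ^ 2) / (2 * p * u))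
      + Real.arccos ((p ^ 2 + v ^ 2 - u ^ 2) / (2 * p * v)) ≤ Real.pi := by
  have key : -((p ^ 2 + u ^ 2 - v ^ 2) / (2 * p * u)) ≤ (p ^ 2 + v ^ 2 - u ^ 2) / (2 * p * v) := by
    have hrw : -((p ^ 2 + u ^ 2 - v ^ 2) / (2 * p * u))
        = (-(p ^ 2 + u ^ 2 - v ^ 2)) / (2 * p * u) := by ring
    rw [hrw, div_le_div_iff₀ (by positivity) (by positivity)]
    nlinarith [mul_nonneg (mul_pos hp (add_pos hu hv)).le (sub_nonneg.2 h)]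
  have anti : Real.arccos ((p ^ 2 + v ^ 2 - u ^ 2) / (2 * p * v))
      ≤ Real.arccos (-((p ^ 2 + u ^ 2 - v ^ 2) / (2 * p * u))) := by
    simp only [Real.arccos]
    have := Real.monotone_arcsin key
    linarith
  rw [Real.arccos_neg] at anti
  linarith

/-- Case analysis for `cos (A + B) > cos C` with `A, B, C ∈ [0, π]`. -/
lemma OD_branch (A B C : ℝ) (hA0 : 0 ≤ A) (hAp : A ≤ Real.pi) (hB0 : 0 ≤ B)
    (hBp : B ≤ Real.pi) (hC0 : 0 ≤ C) (hCp : C ≤ Real.pi)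
    (h : Real.cos C < Real.cos (A + B)) :
    A + B < C ∨ 2 * Real.pi < A + B + C := by
  rcases le_or_gt (A + B) Real.pi with hle | hgt
  · left
    by_contra hcon
    push_neg at hcon
    exact absurd (Real.cos_le_cos_of_nonneg_of_le_pi hC0 hle hcon) (not_le.2 h)
  · right
    by_contra hcon
    push_neg at hcon
    have h2 : Real.cos (2 * Real.pi - (A + B)) = Real.cos (A + B) := Real.cos_two_pi_sub _
    have h4 : Real.cos (2 * Real.pi - (A + B)) ≤ Real.cos C :=
      Real.cos_le_cos_of_nonneg_of_le_pi hC0 (by linarith) (by linarith)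
    rw [h2] at h4
    linarith

/-- Bounds on the cosine quotient coming from the triangle inequality. -/
lemma OD_cosb (u v w : ℝ) (hu : 0 < u) (hv : 0 < v) (hw : 0 ≤ w)
    (h1 : w ≤ u + v) (h2 : u ≤ v + w) (h3 : v ≤ u + w) :
    -1 ≤ (u ^ 2 + v ^ 2 - w ^ 2) / (2 * u * v)
      ∧ (u ^ 2 + v ^ 2 - w ^ 2) / (2 * u * v) ≤ 1 := by
  constructor
  · rw [le_div_iff₀ (by positivity)]
    nlinarith
  · rw [div_le_iff₀ (by positivity)]
    nlinarith

set_option maxHeartbeats 2000000 in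
/-- Corollary 6.12: a quadruple cannot be over-distance with respect to all three of the
pairs `{x,w}`, `{y,w}` and `{z,w}`. -/
theorem not_triple_overDistance {X : Type*} [MetricSpace X] (hX : BoxIneq X)
    (x y z w : X)
    (hxy : x ≠ y) (hxz : x ≠ z) (hxw : x ≠ w)
    (hyz : y ≠ z) (hyw : y ≠ w) (hzw : z ≠ w)
    (hxw' : OverDistance y x z w) (hyw' : OverDistance x y z w) :
    ¬ OverDistance x z y w := by
  intro h3
  -- positivity of the six distances
  have hp : 0 < dist x y := dist_pos.2 hxy
  have hq : 0 < dist y z := dist_pos.2 hyz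
  have hr : 0 < dist x z := dist_pos.2 hxz
  have ha : 0 < dist x w := dist_pos.2 hxw
  have hb : 0 < dist y w := dist_pos.2 hyw
  have hc : 0 < dist z w := dist_pos.2 hzw
  -- triangle inequalities
  have txyz1 : dist y z ≤ dist x y + dist x z := by
    have h := dist_triangle y x z; rwa [dist_comm y x] at h
  have txyz2 : dist x y ≤ dist x z + dist y z := by
    have h := dist_triangle x z y; rwa [dist_comm z y] at h
  have txyz3 : dist x z ≤ dist x y + dist y z := dist_triangle x y z
  have txyw1 : dist y w ≤ dist x y + dist x w := by
    have h := dist_triangle y x w; rwa [dist_comm y x] at h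
  have txyw2 : dist x y ≤ dist x w + dist y w := by
    have h := dist_triangle x w y; rwa [dist_comm w y] at h
  have txyw3 : dist x w ≤ dist x y + dist y w := dist_triangle x y w
  have txzw1 : dist z w ≤ dist x z + dist x w := by
    have h := dist_triangle z x w; rwa [dist_comm z x] at h
  have txzw2 : dist x z ≤ dist x w + dist z w := by
    have h := dist_triangle x w z; rwa [dist_comm w z] at h
  have txzw3 : dist x w ≤ dist x z + dist z w := dist_triangle x z w
  have tyzw1 : dist z w ≤ dist y z + dist y w := by
    have h := dist_triangle z y w; rwa [dist_comm z y] at h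
  have tyzw2 : dist y z ≤ dist y w + dist z w := by
    have h := dist_triangle y w z; rwa [dist_comm w z] at h
  have tyzw3 : dist y w ≤ dist y z + dist z w := dist_triangle y z w
  set p := dist x y with hpd
  set q := dist y z with hqd
  set r := dist x z with hrd
  set a := dist x w with had
  set b := dist y w with hbd
  set c := dist z w with hcd
  -- the nine comparison cosines
  set cA1 := (p ^ 2 + r ^ 2 - q ^ 2) / (2 * p * r) with hcA1d
  set cA2 := (r ^ 2 + a ^ 2 - c ^ 2) / (2 * r * a) with hcA2d
  set cA3 := (p ^ 2 + a ^ 2 - b ^ 2) / (2 * p * a) with hcA3d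
  set cB1 := (p ^ 2 + q ^ 2 - r ^ 2) / (2 * p * q) with hcB1d
  set cB2 := (q ^ 2 + b ^ 2 - c ^ 2) / (2 * q * b) with hcB2d
  set cB3 := (p ^ 2 + b ^ 2 - a ^ 2) / (2 * p * b) with hcB3d
  set cC1 := (q ^ 2 + r ^ 2 - p ^ 2) / (2 * q * r) with hcC1d
  set cC2 := (r ^ 2 + c ^ 2 - a ^ 2) / (2 * r * c) with hcC2d
  set cC3 := (q ^ 2 + c ^ 2 - b ^ 2) / (2 * q * c) with hcC3d
  have bA1 := OD_cosb p r q hp hr hq.le txyz1 (by linarith) (by linarith)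
  have bA2 := OD_cosb r a c hr ha hc.le txzw1 (by linarith) (by linarith)
  have bA3 := OD_cosb p a b hp ha hb.le txyw1 (by linarith) (by linarith)
  have bB1 := OD_cosb p q r hp hq hr.le txyz3 (by linarith) (by linarith)
  have bB2 := OD_cosb q b c hq hb hc.le tyzw1 (by linarith) (by linarith)
  have bB3 := OD_cosb p b a hp hb ha.le txyw3 (by linarith) (by linarith)
  have bC1 := OD_cosb q r p hq hr hp.le (by linarith) (by linarith) (by linarith)
  have bC2 := OD_cosb r c a hr hc ha.le txzw3 (by linarith) (by linarith)
  have bC3 := OD_cosb q c b hq hc hb.le tyzw3 (by linarith) (by linarith)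
  rw [← hcA1d] at bA1; rw [← hcA2d] at bA2; rw [← hcA3d] at bA3
  rw [← hcB1d] at bB1; rw [← hcB2d] at bB2; rw [← hcB3d] at bB3
  rw [← hcC1d] at bC1; rw [← hcC2d] at bC2; rw [← hcC3d] at bC3
  -- application 1: h3 at vertex x
  have S1 : cA2 < Real.cos (Real.arccos cA1 + Real.arccos cA3) := by
    obtain ⟨A, B, C, D, dAB, dAC, dAD, dBC, dBD, dCD⟩ :=
      OD_glue p r a (dist y z) (dist y w) cA1 cA3 hp hr ha hq.le hb.le
        bA1.1 bA1.2 bA3.1 bA3.2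
        (by rw [hcA1d]; field_simp; try ring) (by rw [hcA3d]; field_simp; try ring)
    have key : dist C D < dist z w := by
      refine h3 A C B D ?_ ?_ ?_ ?_ ?_
      · rw [← hrd]; exact dAC
      · rw [dist_comm C B, dist_comm z y]; exact dBC
      · rw [dist_comm B A, dist_comm y x, ← hpd]; exact dAB
      · rw [← had]; exact dAD
      · rw [dist_comm D B, dist_comm w y]; exact dBD
    rw [← hcd] at key
    have hsq : dist C D ^ 2 < c ^ 2 := pow_lt_pow_left₀ key dist_nonneg (by norm_num)
    rw [dCD] at hsq
    rw [hcA2d, div_lt_iff₀ (by positivity)]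
    linarith only [hsq]
  -- application 2: h3 at vertex y
  have S3 : cB2 < Real.cos (Real.arccos cB1 + Real.arccos cB3) := by
    obtain ⟨A, B, C, D, dAB, dAC, dAD, dBC, dBD, dCD⟩ :=
      OD_glue p q b (dist x z) (dist x w) cB1 cB3 hp hq hb hr.le ha.le
        bB1.1 bB1.2 bB3.1 bB3.2
        (by rw [hcB1d]; field_simp; try ring) (by rw [hcB3d]; field_simp; try ring)
    have key : dist C D < dist z w := by
      refine h3 B C A D ?_ ?_ ?_ ?_ ?_
      · rw [← hrd]; exact dBC
      · rw [dist_comm C A, dist_comm z y, ← hqd]; exact dAC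
      · rw [dist_comm y x, ← hpd]; exact dAB
      · rw [← had]; exact dBD
      · rw [dist_comm D A, dist_comm w y, ← hbd]; exact dAD
    rw [← hcd] at key
    have hsq : dist C D ^ 2 < c ^ 2 := pow_lt_pow_left₀ key dist_nonneg (by norm_num)
    rw [dCD] at hsq
    rw [hcB2d, div_lt_iff₀ (by positivity)]
    linarith only [hsq]
  -- application 3: hyw' at vertex x
  have S2 : cA3 < Real.cos (Real.arccos cA1 + Real.arccos cA2) := by
    obtain ⟨A, B, C, D, dAB, dAC, dAD, dBC, dBD, dCD⟩ :=
      OD_glue r p a (dist y z) (dist z w) cA1 cA2 hr hp ha hq.le hc.le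
        bA1.1 bA1.2 bA2.1 bA2.2
        (by rw [hcA1d]; field_simp; try ring) (by rw [hcA2d]; field_simp; try ring)
    have key : dist C D < dist y w := by
      refine hyw' A C B D ?_ ?_ ?_ ?_ ?_
      · rw [← hpd]; exact dAC
      · rw [dist_comm C B, ← hqd]; exact dBC
      · rw [dist_comm B A, dist_comm z x, ← hrd]; exact dAB
      · rw [← had]; exact dAD
      · rw [dist_comm D B, dist_comm w z]; exact dBD
    rw [← hbd] at key
    have hsq : dist C D ^ 2 < b ^ 2 := pow_lt_pow_left₀ key dist_nonneg (by norm_num)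
    rw [dCD] at hsq
    rw [hcA3d, div_lt_iff₀ (by positivity)]
    linarith only [hsq]
  -- application 4: hyw' at vertex z
  have S5 : cC3 < Real.cos (Real.arccos cC1 + Real.arccos cC2) := by
    obtain ⟨A, B, C, D, dAB, dAC, dAD, dBC, dBD, dCD⟩ :=
      OD_glue r q c (dist x y) (dist x w) cC1 cC2 hr hq hc hp.le ha.le
        bC1.1 bC1.2 bC2.1 bC2.2
        (by rw [hcC1d]; field_simp; try ring) (by rw [hcC2d]; field_simp; try ring)
    have key : dist C D < dist y w := by
      refine hyw' B C A D ?_ ?_ ?_ ?_ ?_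
      · rw [← hpd]; exact dBC
      · rw [dist_comm C A, ← hqd]; exact dAC
      · rw [dist_comm z x, ← hrd]; exact dAB
      · rw [← had]; exact dBD
      · rw [dist_comm D A, dist_comm w z, ← hcd]; exact dAD
    rw [← hbd] at key
    have hsq : dist C D ^ 2 < b ^ 2 := pow_lt_pow_left₀ key dist_nonneg (by norm_num)
    rw [dCD] at hsq
    rw [hcC3d, div_lt_iff₀ (by positivity)]
    linarith only [hsq]
  -- application 5: hxw' at vertex y
  have S4 : cB3 < Real.cos (Real.arccos cB1 + Real.arccos cB2) := by
    obtain ⟨A, B, C, D, dAB, dAC, dAD, dBC, dBD, dCD⟩ :=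
      OD_glue q p b (dist x z) (dist z w) cB1 cB2 hq hp hb hr.le hc.le
        bB1.1 bB1.2 bB2.1 bB2.2
        (by rw [hcB1d]; field_simp; try ring) (by rw [hcB2d]; field_simp; try ring)
    have key : dist C D < dist x w := by
      refine hxw' A C B D ?_ ?_ ?_ ?_ ?_
      · rw [dist_comm y x, ← hpd]; exact dAC
      · rw [dist_comm C B, ← hrd]; exact dBC
      · rw [dist_comm B A, dist_comm z y, ← hqd]; exact dAB
      · rw [← hbd]; exact dAD
      · rw [dist_comm D B, dist_comm w z]; exact dBD
    rw [← had] at key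
    have hsq : dist C D ^ 2 < a ^ 2 := pow_lt_pow_left₀ key dist_nonneg (by norm_num)
    rw [dCD] at hsq
    rw [hcB3d, div_lt_iff₀ (by positivity)]
    linarith only [hsq]
  -- application 6: hxw' at vertex z
  have S6 : cC2 < Real.cos (Real.arccos cC1 + Real.arccos cC3) := by
    obtain ⟨A, B, C, D, dAB, dAC, dAD, dBC, dBD, dCD⟩ :=
      OD_glue q r c (dist x y) (dist y w) cC1 cC3 hq hr hc hp.le hb.le
        bC1.1 bC1.2 bC3.1 bC3.2
        (by rw [hcC1d]; field_simp; try ring) (by rw [hcC3d]; field_simp; try ring)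
    have key : dist C D < dist x w := by
      refine hxw' B C A D ?_ ?_ ?_ ?_ ?_
      · rw [dist_comm y x, ← hpd]; exact dBC
      · rw [dist_comm C A, ← hrd]; exact dAC
      · rw [dist_comm z y, ← hqd]; exact dAB
      · rw [← hbd]; exact dBD
      · rw [dist_comm D A, dist_comm w z, ← hcd]; exact dAD
    rw [← had] at key
    have hsq : dist C D ^ 2 < a ^ 2 := pow_lt_pow_left₀ key dist_nonneg (by norm_num)
    rw [dCD] at hsq
    rw [hcC2d, div_lt_iff₀ (by positivity)]
    linarith only [hsq]
  -- pass to angles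
  set A1 := Real.arccos cA1 with hA1d
  set A2 := Real.arccos cA2 with hA2d
  set A3 := Real.arccos cA3 with hA3d
  set B1 := Real.arccos cB1 with hB1d
  set B2 := Real.arccos cB2 with hB2d
  set B3 := Real.arccos cB3 with hB3d
  set C1 := Real.arccos cC1 with hC1d
  set C2 := Real.arccos cC2 with hC2d
  set C3 := Real.arccos cC3 with hC3d
  have ccA2 : Real.cos A2 = cA2 := by rw [hA2d]; exact Real.cos_arccos bA2.1 bA2.2
  have ccA3 : Real.cos A3 = cA3 := by rw [hA3d]; exact Real.cos_arccos bA3.1 bA3.2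
  have ccB2 : Real.cos B2 = cB2 := by rw [hB2d]; exact Real.cos_arccos bB2.1 bB2.2
  have ccB3 : Real.cos B3 = cB3 := by rw [hB3d]; exact Real.cos_arccos bB3.1 bB3.2
  have ccC2 : Real.cos C2 = cC2 := by rw [hC2d]; exact Real.cos_arccos bC2.1 bC2.2
  have ccC3 : Real.cos C3 = cC3 := by rw [hC3d]; exact Real.cos_arccos bC3.1 bC3.2
  have bx1 := OD_branch A1 A3 A2 (Real.arccos_nonneg _) (Real.arccos_le_pi _)
    (Real.arccos_nonneg _) (Real.arccos_le_pi _) (Real.arccos_nonneg _) (Real.arccos_le_pi _)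
    (by rw [ccA2]; exact S1)
  have bx2 := OD_branch A1 A2 A3 (Real.arccos_nonneg _) (Real.arccos_le_pi _)
    (Real.arccos_nonneg _) (Real.arccos_le_pi _) (Real.arccos_nonneg _) (Real.arccos_le_pi _)
    (by rw [ccA3]; exact S2)
  have by1 := OD_branch B1 B3 B2 (Real.arccos_nonneg _) (Real.arccos_le_pi _)
    (Real.arccos_nonneg _) (Real.arccos_le_pi _) (Real.arccos_nonneg _) (Real.arccos_le_pi _)
    (by rw [ccB2]; exact S3)
  have by2 := OD_branch B1 B2 B3 (Real.arccos_nonneg _) (Real.arccos_le_pi _)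
    (Real.arccos_nonneg _) (Real.arccos_le_pi _) (Real.arccos_nonneg _) (Real.arccos_le_pi _)
    (by rw [ccB3]; exact S4)
  have bz1 := OD_branch C1 C2 C3 (Real.arccos_nonneg _) (Real.arccos_le_pi _)
    (Real.arccos_nonneg _) (Real.arccos_le_pi _) (Real.arccos_nonneg _) (Real.arccos_le_pi _)
    (by rw [ccC3]; exact S5)
  have bz2 := OD_branch C1 C3 C2 (Real.arccos_nonneg _) (Real.arccos_le_pi _)
    (Real.arccos_nonneg _) (Real.arccos_le_pi _) (Real.arccos_nonneg _) (Real.arccos_le_pi _)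
    (by rw [ccC2]; exact S6)
  have hA10 : 0 ≤ A1 := Real.arccos_nonneg _
  have hB10 : 0 ≤ B1 := Real.arccos_nonneg _
  have hC10 : 0 ≤ C1 := Real.arccos_nonneg _
  have sumx : 2 * Real.pi < A1 + A2 + A3 := by
    rcases bx1 with h | h
    · rcases bx2 with h' | h'
      · linarith
      · linarith
    · linarith
  have sumy : 2 * Real.pi < B1 + B2 + B3 := by
    rcases by1 with h | h
    · rcases by2 with h' | h'
      · linarith
      · linarith
    · linarith
  have sumz : 2 * Real.pi < C1 + C2 + C3 := by
    rcases bz1 with h | h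
    · rcases bz2 with h' | h'
      · linarith
      · linarith
    · linarith
  -- pairs of base angles
  have pr1 : (0:ℝ) ≤ (p + q - r) * (p + r - q) :=
    mul_nonneg (by linarith) (by linarith)
  have pair1 : A1 + B1 ≤ Real.pi := by
    rw [hA1d, hB1d, hcA1d, hcB1d]
    exact OD_pair_le_pi p r q hp hr hq (by linarith only [pr1])
  have pr2 : (0:ℝ) ≤ (r + a - c) * (r + c - a) :=
    mul_nonneg (by linarith) (by linarith)
  have pair2 : A2 + C2 ≤ Real.pi := by
    rw [hA2d, hC2d, hcA2d, hcC2d]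
    exact OD_pair_le_pi r a c hr ha hc (by linarith only [pr2])
  have pr3 : (0:ℝ) ≤ (p + a - b) * (p + b - a) :=
    mul_nonneg (by linarith) (by linarith)
  have pair3 : A3 + B3 ≤ Real.pi := by
    rw [hA3d, hB3d, hcA3d, hcB3d]
    exact OD_pair_le_pi p a b hp ha hb (by linarith only [pr3])
  have pr4 : (0:ℝ) ≤ (q + b - c) * (q + c - b) :=
    mul_nonneg (by linarith) (by linarith)
  have pair4 : B2 + C3 ≤ Real.pi := by
    rw [hB2d, hC3d, hcB2d, hcC3d]
    exact OD_pair_le_pi q b c hq hb hc (by linarith only [pr4])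
  have hC1pi : C1 ≤ Real.pi := Real.arccos_le_pi _
  have hpi : 0 < Real.pi := Real.pi_pos
  linarith
end
end

section
/- Let x,y,z,w ∈ ℝ². If w ∈ conv({x,y,z}), then ‖x−w‖ + ‖w−y‖ ≤ ‖x−z‖ + ‖z−y‖. If moreover x,y,z,w are distinct and the angle ∠yxw is strictly less than ∠yxz, then the inequality is strict. -/
noncomputable section

open EuclideanGeometry

/-- Lemma 7.1: if `w` is in the convex hull of `{x,y,z}`, then
`‖x−w‖ + ‖w−y‖ ≤ ‖x−z‖ + ‖z−y‖`, with strict inequality if the four points are distinct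
and `∠ y x w < ∠ y x z`. -/
theorem dist_sum_le_of_mem_convexHull
    (x y z w : EuclideanSpace ℝ (Fin 2))
    (hw : w ∈ convexHull ℝ ({x, y, z} : Set (EuclideanSpace ℝ (Fin 2)))) :
    dist x w + dist w y ≤ dist x z + dist z y ∧
    (x ≠ y → x ≠ z → x ≠ w → y ≠ z → y ≠ w → z ≠ w →
      EuclideanGeometry.angle y x w < EuclideanGeometry.angle y x z →
      dist x w + dist w y < dist x z + dist z y) := by
  have hyz : ({y, z} : Set (EuclideanSpace ℝ (Fin 2))).Nonempty := ⟨y, by simp⟩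
  rw [show ({x, y, z} : Set (EuclideanSpace ℝ (Fin 2))) = insert x {y, z} from rfl,
    convexHull_insert hyz] at hw
  simp only [convexHull_pair, mem_convexJoin, Set.mem_singleton_iff] at hw
  obtain ⟨x', hx', u, hu, hwu⟩ := hw
  rw [hx'] at hwu
  clear hx' x'
  obtain ⟨c, d, hc, hd, hcd, hu'⟩ := hu
  obtain ⟨a, b, ha, hb, hab, hw'⟩ := hwu
  have ha' : a = 1 - b := by linarith
  have hc' : c = 1 - d := by linarith
  subst ha' hc' hu' hw'
  set U : EuclideanSpace ℝ (Fin 2) := (1 - d) • y + d • z with hU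
  set W : EuclideanSpace ℝ (Fin 2) := (1 - b) • x + b • U with hW
  have e1 : dist x W = b * dist x U := by
    rw [dist_eq_norm, dist_eq_norm, ← norm_smul_of_nonneg hb]
    congr 1
    rw [hW]; module
  have e2 : dist W U = (1 - b) * dist x U := by
    rw [dist_eq_norm, dist_eq_norm, ← norm_smul_of_nonneg ha]
    congr 1
    rw [hW]; module
  have e3 : dist U y = d * dist z y := by
    rw [dist_eq_norm, dist_eq_norm, ← norm_smul_of_nonneg hd]
    congr 1
    rw [hU]; module
  have e4 : dist x U ≤ (1 - d) * dist x y + d * dist x z := by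
    rw [dist_eq_norm, dist_eq_norm, dist_eq_norm, ← norm_smul_of_nonneg hc,
      ← norm_smul_of_nonneg hd]
    calc ‖x - U‖ = ‖(1 - d) • (x - y) + d • (x - z)‖ := by rw [hU]; congr 1; module
      _ ≤ ‖(1 - d) • (x - y)‖ + ‖d • (x - z)‖ := norm_add_le _ _
  have key1 : dist x W + dist W y ≤ dist x U + d * dist z y := by
    have := dist_triangle W U y
    rw [e3] at this
    calc dist x W + dist W y ≤ dist x W + (dist W U + d * dist z y) := by linarith
      _ = dist x U + d * dist z y := by rw [e1, e2]; ring
  have key3 : dist x y ≤ dist x z + dist z y := dist_triangle x z y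
  have main : dist x W + dist W y ≤ dist x z + dist z y := by nlinarith
  refine ⟨main, fun hxy hxz hxw hyz' hyw hzw hang => ?_⟩
  by_contra hcon
  push_neg at hcon
  have heq : dist x W + dist W y = dist x z + dist z y := le_antisymm main hcon
  have hzero : (1 - d) * (dist x z + dist z y - dist x y) = 0 := by nlinarith
  rcases mul_eq_zero.mp hzero with h1 | h2
  · -- d = 1, so U = z and w ∈ [x, z]
    have hd1 : d = 1 := by linarith
    have hUz : U = z := by rw [hU, hd1]; simp
    have hbpos : 0 < b := by
      rcases lt_or_eq_of_le hb with h | h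
      · exact h
      · exfalso; apply hxw; rw [hW, ← h]; simp
    have : EuclideanGeometry.angle y x W = EuclideanGeometry.angle y x z := by
      unfold EuclideanGeometry.angle
      rw [vsub_eq_sub, vsub_eq_sub, vsub_eq_sub,
        show W - x = b • (z - x) by rw [hW, hUz]; module]
      exact InnerProductGeometry.angle_smul_right_of_pos _ _ hbpos
    rw [this] at hang
    exact lt_irrefl _ hang
  · -- z ∈ [x, y], so angle y x z = 0
    have hseq : dist x z + dist z y = dist x y := by linarith
    have hzseg : z ∈ segment ℝ x y := (dist_add_dist_eq_iff.mp hseq).mem_segment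
    obtain ⟨p, q, hp, hq, hpq, hz⟩ := hzseg
    have hqpos : 0 < q := by
      rcases lt_or_eq_of_le hq with h | h
      · exact h
      · exfalso; apply hxz
        rw [← hz, ← h]; simp
        rw [show p = 1 by linarith]; simp
    have hang0 : EuclideanGeometry.angle y x z = 0 := by
      unfold EuclideanGeometry.angle
      rw [vsub_eq_sub, vsub_eq_sub,
        show z - x = q • (y - x) by rw [← hz]; rw [show p = 1 - q by linarith]; module]
      rw [InnerProductGeometry.angle_smul_right_of_pos _ _ hqpos]
      exact InnerProductGeometry.angle_self (sub_ne_zero.mpr (Ne.symm hxy))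
    rw [hang0] at hang
    exact absurd hang (not_lt.mpr (EuclideanGeometry.angle_nonneg _ _ _))
end
end

section
/- Let x,y,z,w ∈ ℝ² be four distinct points with w ∈ conv({x,y,z}). Let x',y',z',w' ∈ ℝ² satisfy ‖x'−z'‖ = ‖x−z‖, ‖z'−y'‖ = ‖z−y‖, ‖x'−w'‖ = ‖x−w‖, ‖w'−y'‖ = ‖w−y‖. If ‖z'−w'‖ ≤ ‖z−w‖, then ‖x'−y'‖ ≤ ‖x−y‖. -/
/-!
Write `w = a • x + b • y + c • z` as a convex combination. For `a + b + c = 1` one has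
`‖a • x + b • y + c • z - p‖² =
  a‖x - p‖² + b‖y - p‖² + c‖z - p‖² - (ab‖x - y‖² + ac‖x - z‖² + bc‖y - z‖²)`.
At `p = w` the left side vanishes; the same identity for the primed points at `p = w'`, with the
given distances, yields `‖a • x' + b • y' + c • z' - w'‖² + ab(‖x' - y'‖² - ‖x - y‖²) ≤ 0`.
If `ab > 0` this is the claim. If `a = 0`, it forces `w' = b • y' + c • z'`, and the identity at
`p = x'` (Stewart's theorem) gives `‖x' - y'‖ = ‖x - y‖`; the case `b = 0` is symmetric.
-/

theorem exists_convexCombination_of_mem_convexHull_triple {𝕜 E : Type*} [Field 𝕜] [LinearOrder 𝕜]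
    [IsStrictOrderedRing 𝕜] [AddCommGroup E] [Module 𝕜 E] {x y z w : E}
    (hw : w ∈ convexHull 𝕜 {x, y, z}) :
    ∃ a b c : 𝕜, 0 ≤ a ∧ 0 ≤ b ∧ 0 ≤ c ∧ a + b + c = 1 ∧ a • x + b • y + c • z = w := by
  rw [convexHull_insert (Set.insert_nonempty y {z}), convexHull_pair, mem_convexJoin] at hw
  obtain ⟨_, rfl, u, ⟨s, t, hs, ht, hst, rfl⟩, a, b', ha, hb', hab', rfl⟩ := hw
  refine ⟨a, b' * s, b' * t, ha, by positivity, by positivity,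
    by linear_combination b' * hst + hab', by module⟩

section Combination

variable {E F : Type*} [NormedAddCommGroup E] [InnerProductSpace ℝ E]
  [NormedAddCommGroup F] [InnerProductSpace ℝ F]

theorem dist_smul_add_smul_add_smul_sq {a b c : ℝ} (habc : a + b + c = 1) (x y z p : E) :
    dist (a • x + b • y + c • z) p ^ 2 =
      a * dist x p ^ 2 + b * dist y p ^ 2 + c * dist z p ^ 2 -
        (a * b * dist x y ^ 2 + a * c * dist x z ^ 2 + b * c * dist y z ^ 2) := by
  have hp : a • x + b • y + c • z - p = a • (x - p) + b • (y - p) + c • (z - p) := by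
    linear_combination (norm := module) habc • p
  simp only [dist_eq_norm, hp]
  rw [← sub_sub_sub_cancel_right x y p, ← sub_sub_sub_cancel_right x z p,
    ← sub_sub_sub_cancel_right y z p]
  generalize x - p = u, y - p = v, z - p = t
  simp only [← real_inner_self_eq_norm_sq, inner_add_left, inner_add_right, inner_sub_left,
    inner_sub_right, real_inner_smul_left, real_inner_smul_right, real_inner_comm u v,
    real_inner_comm u t, real_inner_comm v t]
  linear_combination (a * inner ℝ u u + b * inner ℝ v v + c * inner ℝ t t) * habc

theorem dist_combination_sq_add_mul_le {x y z w : E} {x' y' z' w' : F} {a b c : ℝ}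
    (hc : 0 ≤ c) (habc : a + b + c = 1) (hw : a • x + b • y + c • z = w)
    (hxz : dist x' z' = dist x z) (hyz : dist y' z' = dist y z)
    (hxw : dist x' w' = dist x w) (hyw : dist y' w' = dist y w) (hzw : dist z' w' ≤ dist z w) :
    dist (a • x' + b • y' + c • z') w' ^ 2 + a * b * dist x' y' ^ 2 ≤ a * b * dist x y ^ 2 := by
  have h := dist_smul_add_smul_add_smul_sq habc x y z w
  have h' := dist_smul_add_smul_add_smul_sq habc x' y' z' w'
  rw [hw, dist_self] at h
  rw [hxz, hyz, hxw, hyw] at h'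
  have : c * dist z' w' ^ 2 ≤ c * dist z w ^ 2 := by gcongr
  linarith

theorem dist_le_dist_of_combination_eq {x y z w : E} {x' y' z' w' : F} {a b c : ℝ}
    (ha : 0 ≤ a) (hb : 0 < b) (hc : 0 ≤ c) (habc : a + b + c = 1) (hw : a • x + b • y + c • z = w)
    (hxz : dist x' z' = dist x z) (hyz : dist y' z' = dist y z)
    (hxw : dist x' w' = dist x w) (hyw : dist y' w' = dist y w) (hzw : dist z' w' ≤ dist z w) :
    dist x' y' ≤ dist x y := by
  have key := dist_combination_sq_add_mul_le hc habc hw hxz hyz hxw hyw hzw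
  rcases ha.eq_or_lt with rfl | ha
  · have hw' : (0 : ℝ) • x' + b • y' + c • z' = w' := by
      rw [← dist_eq_zero, ← sq_nonpos_iff]
      simpa using key
    have h := dist_smul_add_smul_add_smul_sq habc x y z x
    have h' := dist_smul_add_smul_add_smul_sq habc x' y' z' x'
    rw [hw, dist_comm w, dist_comm y x, dist_comm z x] at h
    rw [hw', dist_comm w', hxw, dist_comm y' x', dist_comm z' x', hxz, hyz] at h'
    have : b * dist x' y' ^ 2 = b * dist x y ^ 2 := by linear_combination h - h'
    exact (pow_left_inj₀ dist_nonneg dist_nonneg two_ne_zero).1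
      (mul_left_cancel₀ hb.ne' this) |>.le
  · have : a * b * dist x' y' ^ 2 ≤ a * b * dist x y ^ 2 :=
      le_of_add_le_of_nonneg_right key (sq_nonneg _)
    exact (pow_le_pow_iff_left₀ dist_nonneg dist_nonneg two_ne_zero).1
      (le_of_mul_le_mul_left this (by positivity))

end Combination

theorem larger_larger_general
    (x y z w x' y' z' w' : EuclideanSpace ℝ (Fin 2))
    (hzw : z ≠ w)
    (hw : w ∈ convexHull ℝ ({x, y, z} : Set (EuclideanSpace ℝ (Fin 2))))
    (h1 : dist x' z' = dist x z) (h2 : dist z' y' = dist z y)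
    (h3 : dist x' w' = dist x w) (h4 : dist w' y' = dist w y)
    (h5 : dist z' w' ≤ dist z w) :
    dist x' y' ≤ dist x y := by
  obtain ⟨a, b, c, ha, hb, hc, habc, hwc⟩ := exists_convexCombination_of_mem_convexHull_triple hw
  rw [dist_comm z', dist_comm z] at h2
  rw [dist_comm w', dist_comm w] at h4
  rcases hb.eq_or_lt with rfl | hb
  · have ha : 0 < a := by
      refine ha.lt_of_ne ?_
      rintro rfl
      apply hzw
      rw [← hwc, show c = 1 by linarith]
      simp
    rw [dist_comm, dist_comm x]
    exact dist_le_dist_of_combination_eq le_rfl ha hc (by linarith) (by rw [← hwc]; module)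
      h2 h1 h4 h3 h5
  · exact dist_le_dist_of_combination_eq ha hb hc habc hwc h1 h2 h3 h4 h5

/-- Lemma 7.4: let `x,y,z,w ∈ ℝ²` be four distinct points with `w ∈ conv{x,y,z}`, and let
`x',y',z',w'` realize the distances `xz`, `zy`, `xw`, `wy`. If `‖z'−w'‖ ≤ ‖z−w‖`, then
`‖x'−y'‖ ≤ ‖x−y‖`. -/
theorem larger_larger
    (x y z w x' y' z' w' : EuclideanSpace ℝ (Fin 2))
    (hxy : x ≠ y) (hxz : x ≠ z) (hxw : x ≠ w)
    (hyz : y ≠ z) (hyw : y ≠ w) (hzw : z ≠ w)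
    (hw : w ∈ convexHull ℝ ({x, y, z} : Set (EuclideanSpace ℝ (Fin 2))))
    (h1 : dist x' z' = dist x z) (h2 : dist z' y' = dist z y)
    (h3 : dist x' w' = dist x w) (h4 : dist w' y' = dist w y)
    (h5 : dist z' w' ≤ dist z w) :
    dist x' y' ≤ dist x y :=
  larger_larger_general x y z w x' y' z' w' hzw hw h1 h2 h3 h4 h5
end

section
/- Let x,y,z,w ∈ ℝ² with w ∉ {x,y,z}. Then w ∈ conv({x,y,z}) if and only if y and z are not strictly on the same side of the line through x and w, and ∠ywx + ∠xwz ≥ π. -/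
/-!
With `u = x - w`, `v = y - w`, `t = z - w`, the point `w` lies in the triangle iff some
combination `b • v + c • t` with `b, c ≥ 0`, `b + c > 0` lies on the ray `-ℝ≥0 • u`; in the
oriented plane, with area form `ω`, this means `⟪u, b • v + c • t⟫ ≤ 0` and
`ω u (b • v + c • t) = 0`. The side condition is `ω u v * ω u t ≤ 0`, and the angle condition is
`⟪u, v⟫ ‖t‖ + ⟪u, t⟫ ‖v‖ ≤ 0`: the bisector `d = ‖t‖ • v + ‖v‖ • t` of `v` and `t` makes a
non-acute angle with `u`.

Necessity of the angle condition holds in any inner product space, since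
`⟪d, b • v + c • t⟫ = (b ‖v‖ + c ‖t‖)(‖v‖ ‖t‖ + ⟪v, t⟫) ≥ 0`. For sufficiency, the weights
`(|ω u t|, |ω u v|)` cancel the `ω u`-component, and the remaining component points against `u`
because `cos α + cos β ≤ 0` forces `sin (α + β) ≤ 0` for `α, β ∈ [0, π]`.
-/

open RealInnerProductSpace InnerProductGeometry

theorem mem_convexHull_triple_iff_exists_smul_sub_eq_zero {E : Type*} [AddCommGroup E]
    [Module ℝ E] {x y z w : E} :
    w ∈ convexHull ℝ ({x, y, z} : Set E) ↔ ∃ a b c : ℝ, 0 ≤ a ∧ 0 ≤ b ∧ 0 ≤ c ∧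
      0 < a + b + c ∧ a • (x - w) + b • (y - w) + c • (z - w) = 0 := by
  constructor
  · let S : Set E := {w | ∃ a b c : ℝ, 0 ≤ a ∧ 0 ≤ b ∧ 0 ≤ c ∧ a + b + c = 1 ∧
      a • x + b • y + c • z = w}
    have hS : Convex ℝ S := by
      rintro _ ⟨a, b, c, ha, hb, hc, habc, rfl⟩ _ ⟨a', b', c', ha', hb', hc', habc', rfl⟩
        θ θ' hθ hθ' hθθ'
      exact ⟨θ * a + θ' * a', θ * b + θ' * b', θ * c + θ' * c', by positivity, by positivity,
        by positivity, by linear_combination θ * habc + θ' * habc' + hθθ', by module⟩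
    have hxyz : {x, y, z} ⊆ S := by
      rintro _ (rfl | rfl | rfl)
      exacts [⟨1, 0, 0, by norm_num, by norm_num, by norm_num, by norm_num, by module⟩,
        ⟨0, 1, 0, by norm_num, by norm_num, by norm_num, by norm_num, by module⟩,
        ⟨0, 0, 1, by norm_num, by norm_num, by norm_num, by norm_num, by module⟩]
    rintro hw
    obtain ⟨a, b, c, ha, hb, hc, habc, rfl⟩ := convexHull_min hxyz hS hw
    refine ⟨a, b, c, ha, hb, hc, by linarith, ?_⟩
    linear_combination (norm := module) -habc • (a • x + b • y + c • z)
  · rintro ⟨a, b, c, ha, hb, hc, hσ, h⟩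
    set σ := a + b + c
    refine mem_convexHull_of_exists_fintype ![a / σ, b / σ, c / σ] ![x, y, z] ?_ ?_
      (fun i => by fin_cases i <;> simp) ?_
    · intro i
      fin_cases i
      exacts [div_nonneg ha hσ.le, div_nonneg hb hσ.le, div_nonneg hc hσ.le]
    · simp [Fin.sum_univ_three, ← add_div, div_self hσ.ne', σ]
    · have hsum : a • x + b • y + c • z = σ • w := by linear_combination (norm := module) h
      simp only [Fin.sum_univ_three, Matrix.cons_val, div_eq_inv_mul, mul_smul, ← smul_add, hsum,
        inv_smul_smul₀ hσ.ne']

/-- In polar form `p = m cos α`, `|q| = m sin α`, `r = n cos β`, `|s| = n sin β` with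
`α, β ∈ [0, π]`, this is `cos α + cos β ≤ 0 → sin (α + β) ≤ 0`, via
`sin (α + β) (sin α + sin β) = (cos α + cos β) (1 - cos α cos β + sin α sin β)`. -/
theorem abs_mul_add_abs_mul_nonpos {p q r s m n : ℝ} (hm : 0 < m) (hn : 0 < n)
    (hpq : p ^ 2 + q ^ 2 = m ^ 2) (hrs : r ^ 2 + s ^ 2 = n ^ 2) (hqs : q ≠ 0 ∨ s ≠ 0)
    (h : p * n + r * m ≤ 0) : |s| * p + |q| * r ≤ 0 := by
  have key : (|s| * p + |q| * r) * (|q| * n + |s| * m) =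
      (p * n + r * m) * (m * n - p * r + |q| * |s|) := by
    linear_combination (p * m) * (sq_abs s + hrs) + (r * n) * (sq_abs q + hpq)
  have hpr : p * r ≤ m * n := by
    nlinarith [sq_nonneg (p * n - r * m), mul_pos hm hn, sq_nonneg q, sq_nonneg s]
  have hpos : 0 < |q| * n + |s| * m := by
    rcases hqs with hq | hs
    · have := abs_pos.2 hq; positivity
    · have := abs_pos.2 hs; positivity
  refine nonpos_of_mul_nonpos_left ?_ hpos
  rw [key]
  exact mul_nonpos_of_nonpos_of_nonneg h
    (add_nonneg (sub_nonneg.2 hpr) (mul_nonneg (abs_nonneg q) (abs_nonneg s)))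

theorem inner_mul_norm_add_inner_mul_norm_nonpos {F : Type*} [NormedAddCommGroup F]
    [InnerProductSpace ℝ F] {u v t : F} (hv : v ≠ 0) (ht : t ≠ 0) {a b c : ℝ} (ha : 0 ≤ a)
    (hb : 0 ≤ b) (hc : 0 ≤ c) (habc : 0 < a + b + c) (h : a • u + b • v + c • t = 0) :
    ⟪u, v⟫ * ‖t‖ + ⟪u, t⟫ * ‖v‖ ≤ 0 := by
  set d := ‖t‖ • v + ‖v‖ • t
  set k := ‖v‖ * ‖t‖ + ⟪v, t⟫
  have hk : 0 ≤ k := by linarith [neg_abs_le ⟪v, t⟫, abs_real_inner_le_norm v t]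
  have hud : ⟪u, d⟫ = ⟪u, v⟫ * ‖t‖ + ⟪u, t⟫ * ‖v‖ := by
    simp only [d, inner_add_right, real_inner_smul_right]; ring
  have hdd : ‖d‖ ^ 2 = 2 * (‖v‖ * ‖t‖) * k := by
    rw [← real_inner_self_eq_norm_sq]
    simp only [d, k, inner_add_left, inner_add_right, real_inner_smul_left, real_inner_smul_right,
      real_inner_self_eq_norm_sq, real_inner_comm v t, norm_smul, norm_norm]
    ring
  have hdu : -a * ⟪u, d⟫ = (b * ‖v‖ + c * ‖t‖) * k := by
    have hvt : b • v + c • t = -(a • u) := by linear_combination (norm := module) h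
    have := congrArg (fun e => ⟪e, d⟫) hvt
    simp only [d, k, inner_add_left, inner_add_right, real_inner_smul_left, real_inner_smul_right,
      inner_neg_left, real_inner_self_eq_norm_sq, real_inner_comm v t] at this ⊢
    linear_combination -this
  have hcs : ⟪u, d⟫ ^ 2 ≤ ‖u‖ ^ 2 * ‖d‖ ^ 2 := by
    rw [← mul_pow]; exact sq_le_sq' (by linarith [neg_abs_le ⟪u, d⟫, abs_real_inner_le_norm u d])
      (le_trans (le_abs_self _) (abs_real_inner_le_norm u d))
  have hnv := norm_pos_iff.2 hv
  have hnt := norm_pos_iff.2 ht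
  rw [← hud]
  by_contra! hpos
  have hnorm : 0 < b * ‖v‖ + c * ‖t‖ ∨ (b = 0 ∧ c = 0) := by
    rcases eq_or_lt_of_le hb with rfl | hb'
    · rcases eq_or_lt_of_le hc with rfl | hc'
      · simp
      · left; positivity
    · left; positivity
  rcases hnorm with hbc | ⟨rfl, rfl⟩
  · have hk0 : k = 0 := le_antisymm (by nlinarith) hk
    have : ⟪u, d⟫ ^ 2 ≤ 0 := by simpa [hdd, hk0] using hcs
    exact (pow_pos hpos 2).not_ge this
  · nlinarith

theorem pi_le_angle_add_angle_iff {F : Type*} [NormedAddCommGroup F] [InnerProductSpace ℝ F]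
    {u v t : F} (hu : u ≠ 0) (hv : v ≠ 0) (ht : t ≠ 0) :
    Real.pi ≤ angle v u + angle u t ↔ ⟪u, v⟫ * ‖t‖ + ⟪u, t⟫ * ‖v‖ ≤ 0 := by
  have hnu := norm_pos_iff.2 hu
  have hnv := norm_pos_iff.2 hv
  have hnt := norm_pos_iff.2 ht
  rw [← sub_le_iff_le_add', ← angle_neg_left, ← Real.strictAntiOn_cos.le_iff_ge
      ⟨angle_nonneg _ _, angle_le_pi _ _⟩ ⟨angle_nonneg _ _, angle_le_pi _ _⟩,
    cos_angle, cos_angle, inner_neg_left, norm_neg, real_inner_comm v u,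
    div_le_div_iff₀ (by positivity) (by positivity)]
  constructor <;> intro h <;> nlinarith

theorem AffineSubspace.sSameSide_iff_mul_pos_of_direction_eq_ker {V P : Type*} [AddCommGroup V]
    [Module ℝ V] [AddTorsor V P] {s : AffineSubspace ℝ P} {f : V →ₗ[ℝ] ℝ}
    (hf : s.direction = LinearMap.ker f) {p y z : P} (hp : p ∈ s) :
    s.SSameSide y z ↔ 0 < f (y -ᵥ p) * f (z -ᵥ p) := by
  have hmem : ∀ q, q ∈ s ↔ f (q -ᵥ p) = 0 := fun q => by
    rw [← vsub_right_mem_direction_iff_mem hp, hf, LinearMap.mem_ker]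
  rw [sSameSide_iff_exists_left hp]
  constructor
  · rintro ⟨hy, hz, p₂, hp₂, hray⟩
    have hy' : f (y -ᵥ p) ≠ 0 := fun h => hy ((hmem y).2 h)
    have hz' : f (z -ᵥ p) ≠ 0 := fun h => hz ((hmem z).2 h)
    have hfz : f (z -ᵥ p₂) = f (z -ᵥ p) := by
      rw [← vsub_sub_vsub_cancel_right z p₂ p, map_sub, (hmem p₂).1 hp₂, sub_zero]
    obtain ⟨r₁, r₂, hr₁, hr₂, hr⟩ := (hray.map f).exists_pos hy' (hfz ▸ hz')
    rw [hfz, smul_eq_mul, smul_eq_mul] at hr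
    have key : r₂ * (f (y -ᵥ p) * f (z -ᵥ p)) = r₁ * f (y -ᵥ p) ^ 2 := by
      linear_combination f (y -ᵥ p) * hr.symm
    exact pos_of_mul_pos_right (key ▸ by positivity) hr₂.le
  · intro hpos
    have hy' : f (y -ᵥ p) ≠ 0 := left_ne_zero_of_mul hpos.ne'
    have hz' : f (z -ᵥ p) ≠ 0 := right_ne_zero_of_mul hpos.ne'
    have ht : 0 < f (z -ᵥ p) / f (y -ᵥ p) := by
      rw [← mul_div_mul_left _ _ hy', ← sq]; positivity
    refine ⟨fun h => hy' ((hmem y).1 h), fun h => hz' ((hmem z).1 h),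
      -((f (z -ᵥ p) / f (y -ᵥ p)) • (y -ᵥ p)) +ᵥ z, (hmem _).2 ?_, ?_⟩
    · rw [vadd_vsub_assoc, map_add, map_neg, map_smul, smul_eq_mul, div_mul_cancel₀ _ hy',
        neg_add_cancel]
    · rw [vsub_vadd_eq_vsub_sub, vsub_self, zero_sub, neg_neg]
      exact SameRay.sameRay_pos_smul_right _ ht

namespace Orientation

variable {E : Type*} [NormedAddCommGroup E] [InnerProductSpace ℝ E] [Fact (Module.finrank ℝ E = 2)]
  (o : Orientation ℝ E (Fin 2))

theorem exists_nonneg_smul_add_eq_zero {u e : E} (hu : u ≠ 0) (hi : ⟪u, e⟫ ≤ 0)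
    (hω : o.areaForm u e = 0) : ∃ a : ℝ, 0 ≤ a ∧ a • u + e = 0 := by
  have hray : SameRay ℝ u (-e) :=
    (o.nonneg_inner_and_areaForm_eq_zero_iff_sameRay u (-e)).1 (by simp [inner_neg_right, hi, hω])
  obtain ⟨a, ha, hae⟩ := hray.exists_nonneg_left hu
  exact ⟨a, ha, by rw [hae, neg_add_cancel]⟩

theorem ker_areaForm {u : E} (hu : u ≠ 0) : LinearMap.ker (o.areaForm u) = ℝ ∙ u := by
  ext e
  rw [LinearMap.mem_ker, Submodule.mem_span_singleton]
  constructor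
  · intro h
    rcases le_total ⟪u, e⟫ 0 with hi | hi
    · obtain ⟨a, -, hae⟩ := o.exists_nonneg_smul_add_eq_zero hu hi h
      exact ⟨-a, by linear_combination (norm := module) -hae⟩
    · obtain ⟨a, -, hae⟩ := o.exists_nonneg_smul_add_eq_zero hu (e := -e)
        (by rwa [inner_neg_right, neg_nonpos]) (by rw [map_neg, h, neg_zero])
      exact ⟨a, by linear_combination (norm := module) hae⟩
  · rintro ⟨a, rfl⟩
    simp

theorem sSameSide_affineSpan_pair_iff {x y z w : E} (hxw : x ≠ w) :
    (affineSpan ℝ {x, w}).SSameSide y z ↔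
      0 < o.areaForm (x - w) (y - w) * o.areaForm (x - w) (z - w) := by
  refine AffineSubspace.sSameSide_iff_mul_pos_of_direction_eq_ker ?_ (mem_affineSpan ℝ (by simp))
  rw [direction_affineSpan, vectorSpan_pair, o.ker_areaForm (sub_ne_zero.2 hxw), vsub_eq_sub]

theorem exists_nonneg_smul_add_smul_add_smul_eq_zero_iff {u v t : E} (hu : u ≠ 0) (hv : v ≠ 0)
    (ht : t ≠ 0) :
    (∃ a b c : ℝ, 0 ≤ a ∧ 0 ≤ b ∧ 0 ≤ c ∧ 0 < a + b + c ∧ a • u + b • v + c • t = 0) ↔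
      o.areaForm u v * o.areaForm u t ≤ 0 ∧ ⟪u, v⟫ * ‖t‖ + ⟪u, t⟫ * ‖v‖ ≤ 0 := by
  constructor
  · rintro ⟨a, b, c, ha, hb, hc, habc, h⟩
    refine ⟨?_, inner_mul_norm_add_inner_mul_norm_nonpos hv ht ha hb hc habc h⟩
    have hbc : 0 < b + c := by
      by_contra! hbc
      obtain rfl : b = 0 := by linarith
      obtain rfl : c = 0 := by linarith
      simp only [zero_smul, add_zero, smul_eq_zero] at h
      exact h.elim (fun ha0 => by linarith) hu
    have hω : b * o.areaForm u v + c * o.areaForm u t = 0 := by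
      simpa using congrArg (o.areaForm u) h
    by_contra! hpos
    have : b * o.areaForm u v ^ 2 + c * o.areaForm u t ^ 2 +
        (b + c) * (o.areaForm u v * o.areaForm u t) = 0 := by
      linear_combination (o.areaForm u v + o.areaForm u t) * hω
    nlinarith [mul_nonneg hb (sq_nonneg (o.areaForm u v)),
      mul_nonneg hc (sq_nonneg (o.areaForm u t)), mul_pos hbc hpos]
  · rintro ⟨hside, hangle⟩
    suffices ∃ b c : ℝ, 0 ≤ b ∧ 0 ≤ c ∧ 0 < b + c ∧ ⟪u, b • v + c • t⟫ ≤ 0 ∧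
        o.areaForm u (b • v + c • t) = 0 by
      obtain ⟨b, c, hb, hc, hbc, hi, hω⟩ := this
      obtain ⟨a, ha, hau⟩ := o.exists_nonneg_smul_add_eq_zero hu hi hω
      exact ⟨a, b, c, ha, hb, hc, by linarith, by rw [add_assoc, hau]⟩
    simp only [inner_add_right, real_inner_smul_right, map_add, map_smul, smul_eq_mul]
    have hnu := norm_pos_iff.2 hu
    have hnv := norm_pos_iff.2 hv
    have hnt := norm_pos_iff.2 ht
    by_cases hdeg : o.areaForm u v = 0 ∧ o.areaForm u t = 0
    -- `v` and `t` lie on `ℝ ∙ u`, and the bisector `‖t‖ • v + ‖v‖ • t` does the job.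
    · exact ⟨‖t‖, ‖v‖, norm_nonneg _, norm_nonneg _, by positivity, by linarith, by simp [hdeg]⟩
    refine ⟨|o.areaForm u t|, |o.areaForm u v|, abs_nonneg _, abs_nonneg _, ?_, ?_, ?_⟩
    · rcases not_and_or.1 hdeg with h | h
      · have := abs_pos.2 h; positivity
      · have := abs_pos.2 h; positivity
    · refine abs_mul_add_abs_mul_nonpos (mul_pos hnu hnv) (mul_pos hnu hnt)
        (by rw [mul_pow]; exact o.inner_sq_add_areaForm_sq u v)
        (by rw [mul_pow]; exact o.inner_sq_add_areaForm_sq u t) (not_and_or.1 hdeg) ?_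
      nlinarith
    · rcases mul_nonpos_iff.1 hside with ⟨h₁, h₂⟩ | ⟨h₁, h₂⟩
      · rw [abs_of_nonpos h₂, abs_of_nonneg h₁]; ring
      · rw [abs_of_nonneg h₂, abs_of_nonpos h₁]; ring

end Orientation

/-- Lemma 3.14 (convex-hull separation): for `w ∉ {x,y,z}` (and `w ≠ y`, `w ≠ z`),
`w ∈ conv{x,y,z}` iff `y` and `z` are not strictly on the same side of the line through
`x` and `w`, and `∠ y w x + ∠ x w z ≥ π`. -/
theorem mem_convexHull_iff_side_angle
    (x y z w : EuclideanSpace ℝ (Fin 2))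
    (hwx : w ≠ x) (hwy : w ≠ y) (hwz : w ≠ z) :
    w ∈ convexHull ℝ ({x, y, z} : Set (EuclideanSpace ℝ (Fin 2))) ↔
      (¬ (affineSpan ℝ ({x, w} : Set (EuclideanSpace ℝ (Fin 2)))).SSameSide y z ∧
        Real.pi ≤ EuclideanGeometry.angle y w x + EuclideanGeometry.angle x w z) := by
  have : Fact (Module.finrank ℝ (EuclideanSpace ℝ (Fin 2)) = 2) := ⟨finrank_euclideanSpace_fin⟩
  let o : Orientation ℝ (EuclideanSpace ℝ (Fin 2)) (Fin 2) :=
    (EuclideanSpace.basisFun (Fin 2) ℝ).toBasis.orientation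
  have hu : x - w ≠ 0 := sub_ne_zero.2 hwx.symm
  have hv : y - w ≠ 0 := sub_ne_zero.2 hwy.symm
  have ht : z - w ≠ 0 := sub_ne_zero.2 hwz.symm
  rw [mem_convexHull_triple_iff_exists_smul_sub_eq_zero,
    o.exists_nonneg_smul_add_smul_add_smul_eq_zero_iff hu hv ht,
    o.sSameSide_affineSpan_pair_iff hwx.symm, not_lt, EuclideanGeometry.angle,
    EuclideanGeometry.angle, vsub_eq_sub, vsub_eq_sub, vsub_eq_sub,
    pi_le_angle_add_angle_iff hu hv ht]
end
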